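/- arXiv:1905.08317 — 11 statements merged into one kernel-verified Lean document; each statement's English description precedes it below -/
import Mathlib

section
/- For every infinite compact Hausdorff space X, the weight of X (the least cardinality of a topological basis of X) is equal to the density character of the Banach space C(X, ℂ) of continuous complex-valued functions on X with the supremum norm (the least cardinality of a dense subset of C(X, ℂ)). -/
open Cardinal

/-- The weight of a topological space: the least cardinality of a topological basis. -/
noncomputable def topWeight (X : Type u) [TopologicalSpace X] : Cardinal.{u} :=
  sInf {c : Cardinal.{u} | ∃ B : Set (Set X), TopologicalSpace.IsTopologicalBasis B ∧ #B = c}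

/-- The density character of a topological space: the least cardinality of a dense subset. -/
noncomputable def densityChar (Y : Type u) [TopologicalSpace Y] : Cardinal.{u} :=
  sInf {c : Cardinal.{u} | ∃ D : Set Y, Dense D ∧ #D = c}

/-!
A dense set `D ⊆ C(X, ℂ)` yields the basis of sets `{x | ‖g x‖ < 1/2}`, `g ∈ D`: to shrink into
an open set `u ∋ a`, approximate an Urysohn function vanishing at `a` and equal to `1` off `u`.
Conversely, for a basis `B`, Urysohn functions attached to the pairs `U, V ∈ B` with
`closure U ⊆ V` separate points, so by Stone–Weierstrass the algebra they generate is dense. The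
closure of the `ℚ`-algebra generated by them and the constant `i` contains every complex constant,
hence that whole algebra; and since `B` is infinite, this `ℚ`-algebra has at most `#B` elements.
-/

open TopologicalSpace Set

section CardinalInvariants

variable {X : Type u} [TopologicalSpace X]

theorem topWeight_le_mk {B : Set (Set X)} (hB : IsTopologicalBasis B) : topWeight X ≤ #B :=
  csInf_le' ⟨B, hB, rfl⟩

variable (X) in
theorem exists_isTopologicalBasis_mk_eq_topWeight :
    ∃ B : Set (Set X), IsTopologicalBasis B ∧ #B = topWeight X :=
  csInf_mem (s := {c | ∃ B : Set (Set X), IsTopologicalBasis B ∧ #B = c})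
    ⟨_, _, isTopologicalBasis_opens, rfl⟩

theorem densityChar_le_mk {D : Set X} (hD : Dense D) : densityChar X ≤ #D :=
  csInf_le' ⟨D, hD, rfl⟩

variable (X) in
theorem exists_dense_mk_eq_densityChar : ∃ D : Set X, Dense D ∧ #D = densityChar X :=
  csInf_mem (s := {c | ∃ D : Set X, Dense D ∧ #D = c}) ⟨_, univ, dense_univ, rfl⟩

theorem TopologicalSpace.IsTopologicalBasis.infinite [T0Space X] [Infinite X] {B : Set (Set X)}
    (hB : IsTopologicalBasis B) : B.Infinite := by
  intro hfin
  have := hfin.to_subtype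
  have : Finite X := Finite.of_injective (fun x => {s : B | x ∈ (s : Set X)}) fun x y hxy =>
    (hB.inseparable_iff.2 fun s hs => by simpa using congrArg (⟨s, hs⟩ ∈ ·) hxy).eq
  exact not_finite X

theorem TopologicalSpace.IsTopologicalBasis.exists_separatesPoints_mk_le [T4Space X]
    {B : Set (Set X)} (hB : IsTopologicalBasis B) :
    ∃ S : Set C(X, ℝ), #S ≤ #B * #B ∧ ((⇑) '' S : Set (X → ℝ)).SeparatesPoints := by
  have urysohn (p : {p : B × B // closure (p.1 : Set X) ⊆ p.2}) :
      ∃ f : C(X, ℝ), EqOn f 0 (p.1.2 : Set X)ᶜ ∧ EqOn f 1 (closure (p.1.1 : Set X)) :=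
    let ⟨f, hf0, hf1, _⟩ := exists_continuous_zero_one_of_isClosed
      (hB.isOpen p.1.2.2).isClosed_compl isClosed_closure
      (disjoint_left.2 fun _ hx hx' => hx (p.2 hx'))
    ⟨f, hf0, hf1⟩
  choose f hf0 hf1 using urysohn
  refine ⟨range f, mk_range_le.trans ((mk_subtype_le _).trans (mul_def _ _).ge), ?_⟩
  intro x y hxy
  obtain ⟨V, hVB, hxV, hyV⟩ := hB.exists_subset_of_mem_open hxy isOpen_compl_singleton
  obtain ⟨U, hUB, hxU, hUV⟩ := hB.exists_closure_subset (hB.mem_nhds hVB hxV)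
  let p : {p : B × B // closure (p.1 : Set X) ⊆ p.2} := ⟨(⟨U, hUB⟩, ⟨V, hVB⟩), hUV⟩
  refine ⟨f p, mem_image_of_mem _ (mem_range_self p), ?_⟩
  rw [hf1 p (subset_closure hxU), hf0 p fun hy => hyV hy rfl]
  exact one_ne_zero

end CardinalInvariants

section RationalApproximation

variable {A : Type*} [Semiring A] [TopologicalSpace A] [Algebra ℂ A]
  [ContinuousSMul ℂ A] [Algebra ℚ A] [IsScalarTower ℚ ℂ A]

theorem Subalgebra.algebraMap_complex_mem_of_isClosed {R : Subalgebra ℚ A}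
    (hR : IsClosed (R : Set A)) (hI : algebraMap ℂ A Complex.I ∈ R) (c : ℂ) :
    algebraMap ℂ A c ∈ R := by
  have hreal (r : ℝ) : algebraMap ℂ A r ∈ R :=
    Rat.denseRange_cast.induction_on r
      (hR.preimage ((continuous_algebraMap ℂ A).comp Complex.continuous_ofReal))
      fun q => by simpa [IsScalarTower.algebraMap_apply ℚ ℂ A] using R.algebraMap_mem q
  rw [← Complex.re_add_im c, map_add, map_mul]
  exact add_mem (hreal _) (mul_mem (hreal _) hI)

theorem Algebra.adjoin_complex_subset_closure_adjoin_rat [IsTopologicalSemiring A] (s : Set A) :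
    (Algebra.adjoin ℂ s : Set A) ⊆
      closure (Algebra.adjoin ℚ (insert (algebraMap ℂ A Complex.I) s)) := by
  set R := Algebra.adjoin ℚ (insert (algebraMap ℂ A Complex.I) s)
  have hconst := R.topologicalClosure.algebraMap_complex_mem_of_isClosed
    R.isClosed_topologicalClosure (R.le_topologicalClosure (Algebra.subset_adjoin (mem_insert _ _)))
  intro a ha
  rw [← Subalgebra.topologicalClosure_coe]
  induction ha using Algebra.adjoin_induction with
  | mem a ha => exact R.le_topologicalClosure (Algebra.subset_adjoin (mem_insert_of_mem _ ha))
  | algebraMap c => exact hconst c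
  | add a b _ _ ha hb => exact add_mem ha hb
  | mul a b _ _ ha hb => exact mul_mem ha hb

end RationalApproximation

section ContinuousMap

variable {X : Type u} [TopologicalSpace X] [CompactSpace X]

theorem isTopologicalBasis_norm_lt_of_dense [CompletelyRegularSpace X] {D : Set C(X, ℂ)}
    (hD : Dense D) : IsTopologicalBasis ((fun g : C(X, ℂ) => {x | ‖g x‖ < 1 / 2}) '' D) := by
  refine isTopologicalBasis_of_isOpen_of_nhds ?_ fun a u hau hu => ?_
  · rintro _ ⟨g, -, rfl⟩
    exact isOpen_lt g.continuous.norm continuous_const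
  obtain ⟨f, hf, hfa, hfu⟩ := CompletelyRegularSpace.completely_regular_isOpen a u hu hau
  let F : C(X, ℂ) := ⟨fun x => ((f x : ℝ) : ℂ), by fun_prop⟩
  obtain ⟨g, hgD, hgF⟩ := hD.exists_dist_lt F one_half_pos
  have hclose (x : X) : dist (F x) (g x) < 1 / 2 :=
    (ContinuousMap.dist_apply_le_dist x).trans_lt hgF
  refine ⟨_, mem_image_of_mem _ hgD, ?_, fun x hx => ?_⟩
  · simpa [F, hfa, dist_comm] using hclose a
  · by_contra hxu
    have hFx : ‖F x‖ = 1 := by simp [F, hfu hxu]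
    have := norm_le_insert' (F x) (g x)
    linarith [hclose x, dist_eq_norm (F x) (g x), show ‖g x‖ < 1 / 2 from hx]

theorem topWeight_le_densityChar_continuousMap [CompletelyRegularSpace X] :
    topWeight X ≤ densityChar C(X, ℂ) := by
  obtain ⟨D, hD, hDc⟩ := exists_dense_mk_eq_densityChar C(X, ℂ)
  calc topWeight X ≤ #((fun g : C(X, ℂ) => {x | ‖g x‖ < 1 / 2}) '' D) :=
        topWeight_le_mk (isTopologicalBasis_norm_lt_of_dense hD)
    _ ≤ #D := mk_image_le
    _ = densityChar C(X, ℂ) := hDc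

theorem dense_adjoin_rat_of_separatesPoints {S : Set C(X, ℂ)} (hS : ∀ f ∈ S, IsSelfAdjoint f)
    (hsep : ((⇑) '' S : Set (X → ℂ)).SeparatesPoints) :
    Dense (Algebra.adjoin ℚ (insert (algebraMap ℂ C(X, ℂ) Complex.I) S) : Set C(X, ℂ)) := by
  have hstar : star S = S := by
    ext f
    refine ⟨fun hf => ?_, fun hf => by rwa [Set.mem_star, (hS f hf).star_eq]⟩
    rw [Set.mem_star] at hf
    rwa [← star_star f, (hS _ hf).star_eq]
  have hsep' : (StarAlgebra.adjoin ℂ S).SeparatesPoints :=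
    Set.separatesPoints_mono (image_mono (StarAlgebra.subset_adjoin ℂ S)) hsep
  have hdense : Dense (StarAlgebra.adjoin ℂ S : Set C(X, ℂ)) := by
    rw [dense_iff_closure_eq, ← StarSubalgebra.topologicalClosure_coe,
      ContinuousMap.starSubalgebra_topologicalClosure_eq_top_of_separatesPoints _ hsep']
    rfl
  refine dense_closure.mp (hdense.mono ?_)
  rw [← StarSubalgebra.coe_toSubalgebra, StarAlgebra.adjoin_toSubalgebra, hstar, union_self]
  exact Algebra.adjoin_complex_subset_closure_adjoin_rat S

theorem densityChar_continuousMap_le_mk [T2Space X] [Infinite X] {B : Set (Set X)}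
    (hB : IsTopologicalBasis B) : densityChar C(X, ℂ) ≤ #B := by
  have hBinf : ℵ₀ ≤ #B := infinite_iff.mp hB.infinite.to_subtype
  obtain ⟨S, hSB, hSsep⟩ := hB.exists_separatesPoints_mk_le
  let ofReal : C(ℝ, ℂ) := ⟨(↑), Complex.continuous_ofReal⟩
  set T := insert (algebraMap ℂ C(X, ℂ) Complex.I) (ofReal.comp '' S)
  have hdense : Dense (Algebra.adjoin ℚ T : Set C(X, ℂ)) := by
    refine dense_adjoin_rat_of_separatesPoints ?_ fun x y hxy => ?_
    · rintro _ ⟨f, -, rfl⟩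
      ext x
      simp [ofReal]
    · obtain ⟨_, ⟨f, hf, rfl⟩, hfxy⟩ := hSsep hxy
      exact ⟨_, mem_image_of_mem _ (mem_image_of_mem _ hf), by simpa [ofReal] using hfxy⟩
  have hT : #T ≤ #B :=
    calc #T ≤ #S + 1 := mk_insert_le.trans (add_le_add_left mk_image_le 1)
      _ ≤ #B := by rw [← add_one_eq hBinf, ← mul_eq_self hBinf]; exact add_le_add_left hSB 1
  calc densityChar C(X, ℂ) ≤ #(Algebra.adjoin ℚ T) := densityChar_le_mk hdense
    _ ≤ ℵ₀ ⊔ #T ⊔ ℵ₀ := by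
      simpa only [lift_uzero, Cardinal.mkRat, lift_aleph0] using
        Algebra.lift_cardinalMk_adjoin_le ℚ T
    _ ≤ #B := max_le (max_le hBinf hT) hBinf

end ContinuousMap

/-- The weight of an infinite compact Hausdorff space `X` equals the density character of
the Banach space `C(X, ℂ)` of continuous complex-valued functions with the supremum norm. -/
theorem stmt_2 (X : Type u) [TopologicalSpace X] [CompactSpace X] [T2Space X] [Infinite X] :
    topWeight X = densityChar C(X, ℂ) := by
  obtain ⟨B, hB, hBc⟩ := exists_isTopologicalBasis_mk_eq_topWeight X
  exact topWeight_le_densityChar_continuousMap.antisymm (hBc ▸ densityChar_continuousMap_le_mk hB)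
end

section
/- Let X be a compact Hausdorff space. Then X is Corson compact if and only if there exist a cardinal κ and a family (a_α)_{α<κ} of elements of C(X, ℂ) such that: (1) 0 ≤ a_α ≤ 1 for every α (in the canonical order on self-adjoint elements); (2) for every character φ of C(X, ℂ) (unital star-algebra homomorphism C(X, ℂ) → ℂ) the set {α < κ : φ(a_α) ≠ 0} is countable; (3) the smallest closed star-subalgebra of C(X, ℂ) containing 1 and all a_α is C(X, ℂ) itself. -/
/-!
Characters of `C(X, ℂ)` are the point evaluations, so condition (2) says that every point lies
in the support of only countably many `a i`; by Stone–Weierstrass (and, conversely, because point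
evaluations are determined by their values on a generating set) condition (3) says that the
`a i` separate the points of `X`. A family with `0 ≤ a i ≤ 1` is the same as a continuous map
`X → [0,1]^ι`, which for compact Hausdorff `X` is an embedding as soon as it is injective.
-/

open scoped ComplexOrder

/-- A topological space is Corson compact if it is compact Hausdorff and embeds into some
Tychonoff cube `[0,1]^ι` in such a way that every point has countable support. -/
def IsCorsonCompact (X : Type u) [TopologicalSpace X] : Prop :=
  CompactSpace X ∧ T2Space X ∧
    ∃ (ι : Type u) (e : X → (ι → Set.Icc (0:ℝ) 1)), Topology.IsEmbedding e ∧
      ∀ x : X, {ξ : ι | (e x ξ : ℝ) ≠ 0}.Countable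

universe u

open Function Set ContinuousMap

section PointEvaluation

variable {X 𝕜 : Type*} [TopologicalSpace X] [CompactSpace X] [T2Space X] [RCLike 𝕜]

theorem ContinuousMap.evalStarAlgHom_bijective :
    Bijective (fun x : X => evalStarAlgHom 𝕜 𝕜 x) := by
  have hchar := WeakDual.CharacterSpace.continuousMapEval_bijective X 𝕜
  refine ⟨fun x y hxy => hchar.injective ?_, fun φ => ?_⟩
  · ext f
    exact congrArg (fun ψ : C(X, 𝕜) →⋆ₐ[𝕜] 𝕜 => ψ f) hxy
  · obtain ⟨x, hx⟩ := hchar.surjective (WeakDual.CharacterSpace.equivAlgHom.symm φ.toAlgHom)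
    refine ⟨x, StarAlgHom.ext fun f => ?_⟩
    exact congrArg (fun χ : WeakDual.characterSpace 𝕜 C(X, 𝕜) => χ f) hx

theorem ContinuousMap.forall_starAlgHom_iff {P : (C(X, 𝕜) →⋆ₐ[𝕜] 𝕜) → Prop} :
    (∀ φ, P φ) ↔ ∀ x : X, P (evalStarAlgHom 𝕜 𝕜 x) :=
  (evalStarAlgHom_bijective (X := X) (𝕜 := 𝕜)).surjective.forall

theorem ContinuousMap.adjoin_range_topologicalClosure_eq_top_iff {ι : Type*}
    (a : ι → C(X, 𝕜)) :
    (StarAlgebra.adjoin 𝕜 (range a)).topologicalClosure = ⊤ ↔ Injective (fun x i => a i x) := by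
  constructor
  · intro hgen x y hxy
    apply (evalStarAlgHom_bijective (𝕜 := 𝕜)).injective
    have hle : (StarAlgebra.adjoin 𝕜 (range a)).topologicalClosure ≤
        StarAlgHom.equalizer (evalStarAlgHom 𝕜 𝕜 x) (evalStarAlgHom 𝕜 𝕜 y) := by
      refine StarSubalgebra.topologicalClosure_minimal (StarAlgHom.adjoin_le_equalizer _ _ ?_)
        (isClosed_eq (continuous_eval_const x) (continuous_eval_const y))
      rintro _ ⟨i, rfl⟩
      exact congrFun hxy i
    ext f
    exact hle (hgen ▸ StarSubalgebra.mem_top)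
  · intro hsep
    refine starSubalgebra_topologicalClosure_eq_top_of_separatesPoints _ fun x y hxy => ?_
    obtain ⟨i, hi⟩ := Function.ne_iff.mp (hsep.ne hxy)
    exact ⟨a i, ⟨a i, StarAlgebra.subset_adjoin 𝕜 _ ⟨i, rfl⟩, rfl⟩, hi⟩

end PointEvaluation

section Cube

variable {X ι : Type*} [TopologicalSpace X]

def cubeCoord (e : C(X, ι → Icc (0:ℝ) 1)) (i : ι) : C(X, ℂ) :=
  ⟨fun x => ((e x i : ℝ) : ℂ), by fun_prop⟩

@[simp]
theorem cubeCoord_apply (e : C(X, ι → Icc (0:ℝ) 1)) (i : ι) (x : X) :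
    cubeCoord e i x = ((e x i : ℝ) : ℂ) :=
  rfl

theorem cubeCoord_nonneg_and_le_one (e : C(X, ι → Icc (0:ℝ) 1)) (i : ι) :
    0 ≤ cubeCoord e i ∧ cubeCoord e i ≤ 1 :=
  ⟨ContinuousMap.le_def.mpr fun x => Complex.zero_le_real.mpr (e x i).2.1,
    ContinuousMap.le_def.mpr fun x => by simpa using Complex.real_le_real.mpr (e x i).2.2⟩

theorem exists_cubeCoord_eq (a : ι → C(X, ℂ)) (ha : ∀ i, 0 ≤ a i ∧ a i ≤ 1) :
    ∃ e : C(X, ι → Icc (0:ℝ) 1), cubeCoord e = a := by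
  have hre : ∀ i x, ((a i x).re : ℂ) = a i x ∧ (a i x).re ∈ Icc 0 1 := by
    intro i x
    have h0 := Complex.le_def.mp (ContinuousMap.le_def.mp (ha i).1 x)
    have h1 := Complex.le_def.mp (ContinuousMap.le_def.mp (ha i).2 x)
    simp only [ContinuousMap.zero_apply, ContinuousMap.one_apply, Complex.zero_re,
      Complex.one_re, Complex.zero_im] at h0 h1
    exact ⟨Complex.ext rfl (by simp [h0.2]), h0.1, h1.1⟩
  refine ⟨⟨fun x i => ⟨(a i x).re, (hre i x).2⟩, by fun_prop⟩, ?_⟩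
  ext i x
  exact (hre i x).1

theorem injective_cubeCoord_iff (e : C(X, ι → Icc (0:ℝ) 1)) :
    Injective (fun x i => cubeCoord e i x) ↔ Injective e :=
  ((Complex.ofReal_injective.comp Subtype.val_injective).comp_left).of_comp_iff e

end Cube

theorem isCorsonCompact_iff_exists_injective (X : Type u) [TopologicalSpace X] [CompactSpace X]
    [T2Space X] :
    IsCorsonCompact X ↔ ∃ (ι : Type u) (e : C(X, ι → Icc (0:ℝ) 1)),
      Injective e ∧ ∀ x, {i | (e x i : ℝ) ≠ 0}.Countable := by
  constructor
  · rintro ⟨-, -, ι, e, he, hcount⟩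
    exact ⟨ι, ⟨e, he.continuous⟩, he.injective, hcount⟩
  · rintro ⟨ι, e, he, hcount⟩
    exact ⟨‹_›, ‹_›, ι, e, (e.continuous.isClosedEmbedding he).isEmbedding, hcount⟩

/-- A compact Hausdorff space `X` is Corson compact iff there is a family `(a i)` in
`C(X, ℂ)` with `0 ≤ a i ≤ 1`, such that every character of `C(X, ℂ)` vanishes on all but
countably many `a i`, and such that `1` together with the `a i` generates `C(X, ℂ)` as a
closed star-subalgebra. -/
theorem stmt_4 (X : Type u) [TopologicalSpace X] [CompactSpace X] [T2Space X] :
    IsCorsonCompact X ↔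
      ∃ (ι : Type u) (a : ι → C(X, ℂ)),
        (∀ i, 0 ≤ a i ∧ a i ≤ 1) ∧
        (∀ φ : C(X, ℂ) →⋆ₐ[ℂ] ℂ, {i : ι | φ (a i) ≠ 0}.Countable) ∧
        (StarAlgebra.adjoin ℂ (Set.range a)).topologicalClosure = ⊤ := by
  rw [isCorsonCompact_iff_exists_injective]
  constructor
  · rintro ⟨ι, e, he, hcount⟩
    refine ⟨ι, cubeCoord e, cubeCoord_nonneg_and_le_one e, ?_, ?_⟩
    · simpa [forall_starAlgHom_iff] using hcount
    · rwa [adjoin_range_topologicalClosure_eq_top_iff, injective_cubeCoord_iff]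
  · rintro ⟨ι, a, ha, hcount, hgen⟩
    obtain ⟨e, rfl⟩ := exists_cubeCoord_eq a ha
    rw [adjoin_range_topologicalClosure_eq_top_iff, injective_cubeCoord_iff] at hgen
    exact ⟨ι, e, hgen, by simpa [forall_starAlgHom_iff] using hcount⟩
end

section
/- Let X be a compact Hausdorff space. Then X is Eberlein compact if and only if there exist a cardinal κ and a family (a_α)_{α<κ} of elements of C(X, ℂ) such that: (1) 0 ≤ a_α ≤ 1 for every α (in the canonical order on self-adjoint elements); (2) for every character φ of C(X, ℂ) (unital star-algebra homomorphism C(X, ℂ) → ℂ) and every ε > 0 the set {α < κ : |φ(a_α)| > ε} is finite; (3) the smallest closed star-subalgebra of C(X, ℂ) containing 1 and all a_α is C(X, ℂ) itself. -/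
/-!
Characters of `C(X, ℂ)` are the point evaluations, so the finiteness condition on the family
`(a i)` is exactly the finiteness condition on the map `x ↦ (a i x)ᵢ` into `[0,1]^ι` (the `a i`
are real-valued with values in `[0,1]`). By Stone–Weierstrass, and Urysohn for the converse, the
`a i` generate `C(X, ℂ)` as a closed star-subalgebra iff they separate points, i.e. iff this map
is injective; on a compact space a continuous injection into a Hausdorff space is an embedding.
-/

open scoped ComplexOrder

/-- A topological space is Eberlein compact if it is compact Hausdorff and embeds into some
Tychonoff cube `[0,1]^ι` in such a way that for every point `x` and every `ε > 0` only
finitely many coordinates of `x` exceed `ε`. -/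
def IsEberleinCompact (X : Type u) [TopologicalSpace X] : Prop :=
  CompactSpace X ∧ T2Space X ∧
    ∃ (ι : Type u) (e : X → (ι → Set.Icc (0:ℝ) 1)), Topology.IsEmbedding e ∧
      ∀ x : X, ∀ ε : ℝ, 0 < ε → {ξ : ι | ε < (e x ξ : ℝ)}.Finite

namespace ContinuousMap

variable {X 𝕜 : Type*} [TopologicalSpace X] [RCLike 𝕜]

theorem exists_eq_evalStarAlgHom [CompactSpace X] [T2Space X] (φ : C(X, 𝕜) →⋆ₐ[𝕜] 𝕜) :
    ∃ x : X, φ = evalStarAlgHom 𝕜 𝕜 x := by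
  obtain ⟨x, hx⟩ := (WeakDual.CharacterSpace.continuousMapEval_bijective X 𝕜).2
    (WeakDual.CharacterSpace.equivAlgHom.symm φ.toAlgHom)
  exact ⟨x, StarAlgHom.ext fun f => (DFunLike.congr_fun hx f).symm⟩

theorem topologicalClosure_adjoin_eq_top_iff [CompactSpace X] [T2Space X] {s : Set C(X, 𝕜)} :
    (StarAlgebra.adjoin 𝕜 s).topologicalClosure = ⊤ ↔ Set.SeparatesPoints ((⇑) '' s) := by
  refine ⟨fun hs x y hxy => ?_, fun hs => starSubalgebra_topologicalClosure_eq_top_of_separatesPoints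
    _ (Set.separatesPoints_mono (Set.image_mono (StarAlgebra.subset_adjoin 𝕜 s)) hs)⟩
  by_contra! h_agree
  have h_eq : ∀ f : C(X, 𝕜), f x = f y := by
    have h_closed : IsClosed (StarAlgHom.equalizer (evalStarAlgHom 𝕜 𝕜 x)
        (evalStarAlgHom 𝕜 𝕜 y) : Set C(X, 𝕜)) :=
      isClosed_eq (continuous_eval_const x) (continuous_eval_const y)
    have h_top := hs ▸ StarSubalgebra.topologicalClosure_minimal
      (StarAlgHom.adjoin_le_equalizer _ _ fun f hf => h_agree _ ⟨f, hf, rfl⟩) h_closed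
    exact fun f => h_top (StarSubalgebra.mem_top (x := f))
  obtain ⟨g, hg, hgxy⟩ := separatesPoints_continuous_of_t35Space hxy
  exact hgxy (RCLike.ofReal_injective (K := 𝕜) (h_eq ⟨fun z => (g z : 𝕜),
    RCLike.continuous_ofReal.comp hg⟩))

end ContinuousMap

section

variable {X : Type u} [TopologicalSpace X]

theorem IsEberleinCompact.exists_generating_family [CompactSpace X] (hX : IsEberleinCompact X) :
    ∃ (ι : Type u) (a : ι → C(X, ℂ)),
      (∀ i, 0 ≤ a i ∧ a i ≤ 1) ∧
      (∀ φ : C(X, ℂ) →⋆ₐ[ℂ] ℂ, ∀ ε : ℝ, 0 < ε → {i : ι | ε < ‖φ (a i)‖}.Finite) ∧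
      (StarAlgebra.adjoin ℂ (Set.range a)).topologicalClosure = ⊤ := by
  obtain ⟨-, _, ι, e, he, hfin⟩ := hX
  have he_cont := he.continuous
  refine ⟨ι, fun i => ⟨fun x => ((e x i : ℝ) : ℂ), by fun_prop⟩, fun i => ⟨?_, ?_⟩, ?_, ?_⟩
  · exact ContinuousMap.le_def.2 fun x => Complex.zero_le_real.2 (e x i).2.1
  · exact ContinuousMap.le_def.2 fun x => Complex.real_le_real.2 (e x i).2.2
  · intro φ ε hε
    obtain ⟨x, rfl⟩ := ContinuousMap.exists_eq_evalStarAlgHom φ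
    simpa [abs_of_nonneg (e x _).2.1] using hfin x ε hε
  · rw [ContinuousMap.topologicalClosure_adjoin_eq_top_iff]
    intro x y hxy
    obtain ⟨i, hi⟩ := Function.ne_iff.1 (he.injective.ne hxy)
    exact ⟨_, ⟨_, ⟨i, rfl⟩, rfl⟩, by simpa [Subtype.ext_iff] using hi⟩

theorem isEberleinCompact_of_generating_family [CompactSpace X] [T2Space X] {ι : Type u}
    (a : ι → C(X, ℂ)) (ha : ∀ i, 0 ≤ a i ∧ a i ≤ 1)
    (hfin : ∀ φ : C(X, ℂ) →⋆ₐ[ℂ] ℂ, ∀ ε : ℝ, 0 < ε → {i : ι | ε < ‖φ (a i)‖}.Finite)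
    (hgen : (StarAlgebra.adjoin ℂ (Set.range a)).topologicalClosure = ⊤) :
    IsEberleinCompact X := by
  have h_nonneg (i : ι) (x : X) : 0 ≤ a i x := by simpa using ContinuousMap.le_def.1 (ha i).1 x
  have h_le_one (i : ι) (x : X) : a i x ≤ 1 := by simpa using ContinuousMap.le_def.1 (ha i).2 x
  let e : X → ι → Set.Icc (0 : ℝ) 1 := fun x i =>
    ⟨‖a i x‖, norm_nonneg _, (CStarAlgebra.norm_le_one_iff_of_nonneg _ (h_nonneg i x)).2 (h_le_one i x)⟩
  have he_inj : Function.Injective e := by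
    intro x y hxy
    by_contra hne
    obtain ⟨_, ⟨_, ⟨i, rfl⟩, rfl⟩, hi⟩ := ContinuousMap.topologicalClosure_adjoin_eq_top_iff.1 hgen hne
    refine hi ?_
    rw [← RCLike.norm_of_nonneg' (h_nonneg i x), ← RCLike.norm_of_nonneg' (h_nonneg i y)]
    exact congrArg (fun z : Set.Icc (0 : ℝ) 1 => ((z : ℝ) : ℂ)) (congrFun hxy i)
  refine ⟨‹_›, ‹_›, ι, e, (Continuous.isClosedEmbedding (by fun_prop) he_inj).isEmbedding,
    fun x => hfin (ContinuousMap.evalStarAlgHom ℂ ℂ x)⟩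

end

/-- A compact Hausdorff space `X` is Eberlein compact iff there is a family `(a i)` in
`C(X, ℂ)` with `0 ≤ a i ≤ 1`, such that for every character `φ` of `C(X, ℂ)` and every
`ε > 0` the set `{i | |φ (a i)| > ε}` is finite, and such that `1` together with the `a i`
generates `C(X, ℂ)` as a closed star-subalgebra. -/
theorem stmt_5 (X : Type u) [TopologicalSpace X] [CompactSpace X] [T2Space X] :
    IsEberleinCompact X ↔
      ∃ (ι : Type u) (a : ι → C(X, ℂ)),
        (∀ i, 0 ≤ a i ∧ a i ≤ 1) ∧
        (∀ φ : C(X, ℂ) →⋆ₐ[ℂ] ℂ, ∀ ε : ℝ, 0 < ε →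
          {i : ι | ε < ‖φ (a i)‖}.Finite) ∧
        (StarAlgebra.adjoin ℂ (Set.range a)).topologicalClosure = ⊤ :=
  ⟨IsEberleinCompact.exists_generating_family, fun ⟨_, a, ha, hfin, hgen⟩ =>
    isEberleinCompact_of_generating_family a ha hfin hgen⟩
end

section
/- If X is a Corson compact space that has a topological basis of cardinality at most λ, where λ is an infinite cardinal, then the cardinality of X is at most λ^ℵ₀. -/
/-!
A basis of size `≤ λ` yields a dense set `D` of size `≤ λ`. For an embedding `e` with countable
supports, the set `{ξ | e x ξ ≠ 0}` is open in `x`, so the support of every point lies in the union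
`J` of the supports of the points of `D`, and `#J ≤ λ · ℵ₀ = λ`. Hence `x ↦ e x` restricted to `J`
is an injection of `X` into the countably supported functions `J → ℝ`, each of which is
determined by its graph, a countable subset of `J × ℝ`; there are at most `(λ · 𝔠)^ℵ₀ = λ^ℵ₀`
of those.
-/

open Cardinal

open Function Set TopologicalSpace

universe v

theorem TopologicalSpace.IsTopologicalBasis.exists_dense_mk_le {X : Type u} [TopologicalSpace X]
    {B : Set (Set X)} (hB : IsTopologicalBasis B) : ∃ D : Set X, Dense D ∧ #D ≤ #B := by
  let pt : {o : B // (o : Set X).Nonempty} → X := fun o => o.2.some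
  exact ⟨range pt,
    hB.dense_iff.2 fun o ho hne => ⟨pt ⟨⟨o, ho⟩, hne⟩, hne.some_mem, mem_range_self _⟩,
    mk_range_le.trans (mk_subtype_le _)⟩

theorem Dense.support_subset_biUnion {X ι M : Type*} [TopologicalSpace X] [TopologicalSpace M]
    [T1Space M] [Zero M] {D : Set X} (hD : Dense D) {f : X → ι → M} (hf : Continuous f) (x : X) :
    support (f x) ⊆ ⋃ d ∈ D, support (f d) := by
  intro ξ hξ
  have hopen : IsOpen {z | f z ξ ≠ 0} := isOpen_ne.preimage ((continuous_apply ξ).comp hf)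
  obtain ⟨d, hd, hdD⟩ := hD.inter_open_nonempty _ hopen ⟨x, hξ⟩
  exact mem_biUnion hdD hd

theorem Set.injOn_domRestrict_of_support_subset {ι M : Type*} [Zero M] (J : Set ι) :
    InjOn (J.domRestrict : (ι → M) → J → M) {g | support g ⊆ J} := by
  intro g₁ hg₁ g₂ hg₂ h
  funext ξ
  by_cases hξ : ξ ∈ J
  · exact congrFun h ⟨ξ, hξ⟩
  · rw [notMem_support.1 fun h => hξ (hg₁ h), notMem_support.1 fun h => hξ (hg₂ h)]

theorem Function.injective_image_graph_support {α M : Type*} [Zero M] :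
    Injective fun g : α → M => (fun a => (a, g a)) '' support g := by
  have key : ∀ g₁ g₂ : α → M,
      (fun a => (a, g₁ a)) '' support g₁ = (fun a => (a, g₂ a)) '' support g₂ →
        ∀ a, g₁ a ≠ 0 → g₁ a = g₂ a := by
    intro g₁ g₂ h a ha
    obtain ⟨b, -, hb⟩ := h ▸ mem_image_of_mem (fun a => (a, g₁ a)) ha
    obtain ⟨rfl, hb⟩ := Prod.mk.inj hb
    exact hb.symm
  intro g₁ g₂ h
  funext a
  by_cases h₁ : g₁ a = 0
  · by_cases h₂ : g₂ a = 0
    · rw [h₁, h₂]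
    · exact (key g₂ g₁ h.symm a h₂).symm
  · exact key g₁ g₂ h a h₁

theorem Cardinal.mk_countable_support_le {J : Type u} {M : Type v} [Zero M] :
    #{g : J → M // (support g).Countable} ≤ max (lift.{v} #J * lift.{u} #M) ℵ₀ ^ ℵ₀ := by
  let graph : {g : J → M // (support g).Countable} → {t : Set (J × M) // #t ≤ ℵ₀} :=
    fun g => ⟨(fun j => (j, g.1 j)) '' support g.1, le_aleph0_iff_set_countable.2 (g.2.image _)⟩
  have hgraph : Injective graph := fun g₁ g₂ h =>
    Subtype.ext (injective_image_graph_support (congrArg Subtype.val h))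
  calc #{g : J → M // (support g).Countable} ≤ #{t : Set (J × M) // #t ≤ ℵ₀} :=
        mk_le_of_injective hgraph
    _ ≤ max (lift.{v} #J * lift.{u} #M) ℵ₀ ^ ℵ₀ := mk_prod J M ▸ mk_bounded_set_le _ _

theorem Cardinal.mk_biUnion_le_of_countable {ι α : Type u} {A : ι → Set α} {s : Set ι}
    {κ : Cardinal.{u}} (hκ : ℵ₀ ≤ κ) (hs : #s ≤ κ) (hA : ∀ i, (A i).Countable) :
    #(⋃ i ∈ s, A i) ≤ κ :=
  calc #(⋃ i ∈ s, A i) ≤ #s * ⨆ i : s, #(A i) := mk_biUnion_le _ _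
    _ ≤ κ * ℵ₀ := mul_le_mul' hs (ciSup_le' fun i => le_aleph0_iff_set_countable.2 (hA i))
    _ = κ := mul_aleph0_eq hκ

theorem Cardinal.mul_continuum_le_power_aleph0 {κ : Cardinal} (hκ : ℵ₀ ≤ κ) :
    κ * 𝔠 ≤ κ ^ ℵ₀ := by
  have hself : κ ≤ κ ^ ℵ₀ := self_le_power κ one_le_aleph0
  have hcont : 𝔠 ≤ κ ^ ℵ₀ := two_power_aleph0 ▸ power_le_power_right (ofNat_le_aleph0.trans hκ)
  calc κ * 𝔠 ≤ κ ^ ℵ₀ * κ ^ ℵ₀ := mul_le_mul' hself hcont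
    _ = κ ^ ℵ₀ := mul_eq_self (hκ.trans hself)

/-- A Corson compact space with a topological basis of cardinality at most `lam` has
cardinality at most `lam ^ ℵ₀`. -/
theorem stmt_6 (X : Type u) [TopologicalSpace X] (hX : IsCorsonCompact X)
    (lam : Cardinal.{u}) (hlam : ℵ₀ ≤ lam)
    (hw : ∃ B : Set (Set X), TopologicalSpace.IsTopologicalBasis B ∧ #B ≤ lam) :
    #X ≤ lam ^ ℵ₀ := by
  obtain ⟨-, -, ι, e, he, hsupp⟩ := hX
  obtain ⟨B, hB, hBlam⟩ := hw
  obtain ⟨D, hD, hDB⟩ := hB.exists_dense_mk_le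
  let f : X → ι → ℝ := fun x ξ => e x ξ
  have hf : Continuous f := by have := he.continuous; fun_prop
  have hf_inj : Injective f := fun x y h =>
    he.injective <| funext fun ξ => Subtype.ext (congrFun h ξ)
  let J := ⋃ d ∈ D, support (f d)
  have hJ : #J ≤ lam := mk_biUnion_le_of_countable hlam (hDB.trans hBlam) hsupp
  let res : X → {g : J → ℝ // (support g).Countable} :=
    fun x => ⟨J.domRestrict (f x), (hsupp x).preimage Subtype.val_injective⟩
  have hres : Injective res := fun x y h => hf_inj <| injOn_domRestrict_of_support_subset J
    (hD.support_subset_biUnion hf x) (hD.support_subset_biUnion hf y) (congrArg Subtype.val h)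
  calc #X ≤ #{g : J → ℝ // (support g).Countable} := mk_le_of_injective hres
    _ ≤ max (lift.{0} #J * lift.{u} #ℝ) ℵ₀ ^ ℵ₀ := mk_countable_support_le
    _ ≤ (lam ^ ℵ₀) ^ ℵ₀ := by
      refine power_le_power_right (max_le ?_ (hlam.trans (self_le_power lam one_le_aleph0)))
      rw [lift_id', mk_real, lift_continuum]
      exact (mul_le_mul_left hJ 𝔠).trans (mul_continuum_le_power_aleph0 hlam)
    _ = lam ^ ℵ₀ := by rw [← power_mul, aleph0_mul_aleph0]
end

section
/- Let κ be a cardinal, let λ be an infinite cardinal, and let X be a compact subset of the Tychonoff cube [0,1]^κ (the product space of κ copies of Set.Icc (0:ℝ) 1) such that the subspace X has a topological basis of cardinality at most λ. Then there exists a set S ⊆ κ with |S| ≤ λ such that the coordinate projection [0,1]^κ → [0,1]^S is injective on X (and hence, by compactness, a homeomorphism of X onto its image). -/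
open Cardinal

/-- If `X` is a compact subset of a Tychonoff cube `[0,1]^ι` whose subspace topology has a
basis of cardinality at most the infinite cardinal `lam`, then there is a set `S` of at most
`lam` many coordinates such that the projection onto the coordinates in `S` is injective
on `X`. -/
theorem stmt_8 {ι : Type u} (lam : Cardinal.{u}) (hlam : ℵ₀ ≤ lam)
    (X : Set (ι → Set.Icc (0:ℝ) 1)) (hX : IsCompact X)
    (hw : ∃ B : Set (Set ↥X), TopologicalSpace.IsTopologicalBasis B ∧ #B ≤ lam) :
    ∃ S : Set ι, #S ≤ lam ∧
      Set.InjOn (fun x : ι → Set.Icc (0:ℝ) 1 => (fun s : S => x s)) X := by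
  classical
  obtain ⟨B, hB, hBcard⟩ := hw
  haveI : CompactSpace ↥X := isCompact_iff_compactSpace.mp hX
  -- Key: for each pair of basis elements with `closure b₁ ⊆ b₂`, finitely many
  -- coordinates determine a cylinder neighborhood of each point of `closure b₁`
  -- inside `b₂`.
  have key : ∀ b₁ b₂ : Set ↥X, ∃ F : Finset ι, IsOpen b₂ → closure b₁ ⊆ b₂ →
      ∀ z : ↥X, z ∈ closure b₁ → ∃ u : ι → Set (Set.Icc (0:ℝ) 1),
        (∀ i ∈ F, (z : ι → Set.Icc (0:ℝ) 1) i ∈ u i) ∧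
        ∀ w : ↥X, (∀ i ∈ F, (w : ι → Set.Icc (0:ℝ) 1) i ∈ u i) → w ∈ b₂ := by
    intro b₁ b₂
    by_cases h : IsOpen b₂ ∧ closure b₁ ⊆ b₂
    · obtain ⟨hopen, hsub⟩ := h
      obtain ⟨V, hV, hVeq⟩ := isOpen_induced_iff.mp hopen
      have hz : ∀ z : ↥X, z ∈ closure b₁ →
          ∃ (I : Finset ι) (u : ι → Set (Set.Icc (0:ℝ) 1)),
          (∀ i ∈ I, IsOpen (u i) ∧ (z : ι → Set.Icc (0:ℝ) 1) i ∈ u i) ∧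
          (↑I : Set ι).pi u ⊆ V := by
        intro z hzmem
        have hzV : (z : ι → Set.Icc (0:ℝ) 1) ∈ V := by
          have := hsub hzmem
          rw [← hVeq] at this
          exact this
        exact isOpen_pi_iff.mp hV _ hzV
      choose! I u hu hpi using hz
      set O : ↥(closure b₁) → Set ↥X :=
        fun z => ⋂ i ∈ I z.1, {w : ↥X | (w : ι → Set.Icc (0:ℝ) 1) i ∈ u z.1 i} with hO
      have hOopen : ∀ z, IsOpen (O z) := by
        intro z
        apply isOpen_biInter_finset
        intro i hi
        have : Continuous fun w : ↥X => (w : ι → Set.Icc (0:ℝ) 1) i :=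
          (continuous_apply i).comp continuous_subtype_val
        exact (hu z.1 z.2 i hi).1.preimage this
      have hcover : closure b₁ ⊆ ⋃ z, O z := by
        intro z hzmem
        refine Set.mem_iUnion.mpr ⟨⟨z, hzmem⟩, ?_⟩
        simp only [hO, Set.mem_iInter]
        intro i hi
        exact (hu z hzmem i hi).2
      obtain ⟨t, ht⟩ := (isClosed_closure.isCompact).elim_finite_subcover O hOopen hcover
      refine ⟨t.biUnion (fun g => I g.1), fun _ _ z hzmem => ?_⟩
      obtain ⟨g, hgt, hzO⟩ : ∃ g ∈ t, z ∈ O g := by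
        have := ht hzmem
        simpa using this
      refine ⟨fun i => if i ∈ I g.1 then u g.1 i else Set.univ, ?_, ?_⟩
      · intro i _
        dsimp only
        by_cases hi : i ∈ I g.1
        · rw [if_pos hi]
          simp only [hO, Set.mem_iInter] at hzO
          exact hzO i hi
        · rw [if_neg hi]; trivial
      · intro w hw'
        have hmem : (w : ι → Set.Icc (0:ℝ) 1) ∈ (↑(I g.1) : Set ι).pi (u g.1) := by
          intro i hi
          have hiF : i ∈ t.biUnion (fun g => I g.1) :=
            Finset.mem_biUnion.mpr ⟨g, hgt, hi⟩
          have h2 := hw' i hiF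
          dsimp only at h2
          rwa [if_pos (Finset.mem_coe.mp hi)] at h2
        have : (w : ι → Set.Icc (0:ℝ) 1) ∈ V := hpi g.1 g.2 hmem
        rw [← hVeq]
        exact this
    · exact ⟨∅, fun ho hs => absurd ⟨ho, hs⟩ h⟩
  choose F hF using key
  set S : Set ι := ⋃ p : ↥B × ↥B, ↑(F p.1.1 p.2.1) with hS
  refine ⟨S, ?_, ?_⟩
  · have h1 : #(↥B × ↥B) ≤ lam := by
      rw [Cardinal.mk_prod, Cardinal.lift_id]
      calc #B * #B ≤ lam * lam := mul_le_mul' hBcard hBcard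
        _ = lam := Cardinal.mul_eq_self hlam
    calc #S ≤ #(↥B × ↥B) * ⨆ p : ↥B × ↥B, #(↑(F p.1.1 p.2.1) : Set ι) :=
          Cardinal.mk_iUnion_le _
      _ ≤ lam * ℵ₀ := by
          apply mul_le_mul' h1
          exact ciSup_le' fun p => ((Finset.finite_toSet _).lt_aleph0).le
      _ ≤ lam * lam := mul_le_mul' le_rfl hlam
      _ = lam := Cardinal.mul_eq_self hlam
  · intro x hx y hy hxy
    by_contra hne
    have hx' : (⟨x, hx⟩ : ↥X) ≠ ⟨y, hy⟩ := fun h => hne (congrArg Subtype.val h)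
    obtain ⟨U, V, hU, hV, hxU, hyV, hUV⟩ := t2_separation hx'
    obtain ⟨b₂, hb₂B, hxb₂, hb₂U⟩ := hB.exists_subset_of_mem_open hxU hU
    have hynb₂ : (⟨y, hy⟩ : ↥X) ∉ b₂ := fun h =>
      Set.disjoint_left.mp hUV (hb₂U h) hyV
    obtain ⟨s, hs_nhds, hs_closed, hs_sub⟩ :=
      exists_mem_nhds_isClosed_subset ((hB.isOpen hb₂B).mem_nhds hxb₂)
    obtain ⟨O', hOs, hO', hxO'⟩ := mem_nhds_iff.mp hs_nhds
    obtain ⟨b₁, hb₁B, hxb₁, hb₁O⟩ := hB.exists_subset_of_mem_open hxO' hO'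
    have hclosure : closure b₁ ⊆ b₂ := by
      refine (closure_mono (hb₁O.trans hOs)).trans ?_
      rw [hs_closed.closure_eq]
      exact hs_sub
    obtain ⟨u, hzu, hub₂⟩ :=
      hF b₁ b₂ (hB.isOpen hb₂B) hclosure ⟨x, hx⟩ (subset_closure hxb₁)
    have hnot : ¬ ∀ i ∈ F b₁ b₂, (⟨y, hy⟩ : ↥X).1 i ∈ u i := fun h => hynb₂ (hub₂ _ h)
    push_neg at hnot
    obtain ⟨i, hiF, hyu⟩ := hnot
    have hiS : i ∈ S := Set.mem_iUnion.mpr ⟨(⟨b₁, hb₁B⟩, ⟨b₂, hb₂B⟩), Finset.mem_coe.mpr hiF⟩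
    have hxyi : x i = y i := congrFun hxy ⟨i, hiS⟩
    have hxu : x i ∈ u i := hzu i hiF
    exact hyu (show y i ∈ u i from hxyi ▸ hxu)
end

section
/- Let X be a compact Hausdorff space, let Y ⊆ X, and let A be a closed unital star-subalgebra of C(X, ℂ). The following are equivalent: (1) the smallest closed star-subalgebra of C(X, ℂ) containing A together with the annihilator {a ∈ C(X, ℂ) : a(y) = 0 for all y ∈ Y} is all of C(X, ℂ); (2) whenever x and y belong to the closure of Y and a(x) = a(y) for all a ∈ A, then x = y; (3) the restriction map a ↦ a|_{closure(Y)} maps A onto C(closure(Y), ℂ). -/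
/-!
(1) ⇔ (2): every element of the closed star-algebra generated by `A` and the annihilator of `Y`
takes equal values at two points of `closure Y` that `A` does not separate, and conversely, when
`A` separates the points of `closure Y`, Urysohn functions vanishing on `closure Y` separate
the remaining pairs, so Stone–Weierstrass applies.

(2) ⇒ (3): the elements of `A` factor through the compact Hausdorff space `Z` of their joint
values `x ↦ (a x)_{a ∈ A}`. The coordinate functions separate the points of `Z`, so by
Stone–Weierstrass and the closedness of `A`, every `f ∘ ev` with `f ∈ C(Z)` lies in `A`. If `A`
separates the points of `closure Y`, then `ev` embeds `closure Y` into `Z` as a closed subset,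
and a Tietze extension of `g ∘ ev⁻¹` to `Z` gives the required element of `A`.
-/

open ContinuousMap

variable {𝕜 X : Type*} [RCLike 𝕜] [TopologicalSpace X]

lemma exists_continuousMap_eqOn_zero_apply_eq_one [NormalSpace X] [T1Space X] {C : Set X}
    (hC : IsClosed C) {y : X} (hy : y ∉ C) : ∃ f : C(X, 𝕜), Set.EqOn f 0 C ∧ f y = 1 := by
  obtain ⟨f, hf0, hf1, -⟩ := exists_continuous_zero_one_of_isClosed hC isClosed_singleton
    (Set.disjoint_singleton_right.mpr hy)
  exact ⟨⟨fun z => (f z : 𝕜), by fun_prop⟩, fun z hz => by simp [hf0 hz], by simp [hf1 rfl]⟩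

lemma exists_continuousMap_eqOn_zero_apply_ne [NormalSpace X] [T1Space X] {C : Set X}
    (hC : IsClosed C) {x y : X} (hxy : x ≠ y) (hy : y ∉ C) :
    ∃ f : C(X, 𝕜), Set.EqOn f 0 C ∧ f x ≠ f y := by
  obtain ⟨f, hf0, hf1⟩ := exists_continuousMap_eqOn_zero_apply_eq_one (𝕜 := 𝕜)
    (hC.union (isClosed_singleton (x := x))) (y := y) (by simp [hy, hxy.symm])
  refine ⟨f, hf0.mono Set.subset_union_left, ?_⟩
  rw [hf0 (Set.mem_union_right _ rfl), hf1]
  exact zero_ne_one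

lemma exists_continuousMap_apply_ne [NormalSpace X] [T1Space X] {x y : X} (hxy : x ≠ y) :
    ∃ f : C(X, 𝕜), f x ≠ f y :=
  (exists_continuousMap_eqOn_zero_apply_ne isClosed_empty hxy (Set.notMem_empty y)).imp
    fun _ hf => hf.2

lemma apply_eq_apply_of_mem_topologicalClosure_adjoin [CompactSpace X] {S : Set C(X, 𝕜)}
    {x y : X} (hS : ∀ s ∈ S, s x = s y) {f : C(X, 𝕜)}
    (hf : f ∈ (StarAlgebra.adjoin 𝕜 S).topologicalClosure) : f x = f y :=
  StarSubalgebra.topologicalClosure_minimal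
    (StarAlgHom.adjoin_le_equalizer (evalStarAlgHom 𝕜 𝕜 x) (evalStarAlgHom 𝕜 𝕜 y) hS)
    (isClosed_eq (continuous_eval_const x) (continuous_eval_const y)) hf

lemma eqOn_closure_zero_of_forall_eq_zero {Y : Set X} {a : C(X, 𝕜)} (ha : ∀ y ∈ Y, a y = 0) :
    Set.EqOn a 0 (closure Y) :=
  Set.EqOn.closure ha a.continuous continuous_const

namespace StarSubalgebra

lemma comp_mem_of_separatesPoints {Z : Type*} [TopologicalSpace Z] [CompactSpace Z]
    {A : StarSubalgebra 𝕜 C(X, 𝕜)} (hA : IsClosed (A : Set C(X, 𝕜))) (π : C(X, Z))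
    (hsep : (A.comap (compStarAlgHom' 𝕜 𝕜 π)).SeparatesPoints) (f : C(Z, 𝕜)) :
    f.comp π ∈ A := by
  have hclosed : IsClosed (A.comap (compStarAlgHom' 𝕜 𝕜 π) : Set C(Z, 𝕜)) :=
    hA.preimage (continuous_precomp π)
  have htop := starSubalgebra_topologicalClosure_eq_top_of_separatesPoints _ hsep
  exact topologicalClosure_minimal le_rfl hclosed (htop ▸ mem_top : f ∈ _)

theorem exists_mem_restrict_eq [CompactSpace X] {A : StarSubalgebra 𝕜 C(X, 𝕜)}
    (hA : IsClosed (A : Set C(X, 𝕜))) {K : Set X} (hK : IsClosed K)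
    (hsep : ∀ x ∈ K, ∀ y ∈ K, (∀ a ∈ A, a x = a y) → x = y) (g : C(K, 𝕜)) :
    ∃ a ∈ A, a.restrict K = g := by
  have : CompactSpace K := isCompact_iff_compactSpace.mp hK.isCompact
  let ev : C(X, A → 𝕜) := ⟨fun x a => (a : C(X, 𝕜)) x, by fun_prop⟩
  have : CompactSpace (Set.range ev) :=
    isCompact_iff_compactSpace.mp (isCompact_range ev.continuous)
  let π : C(X, Set.range ev) := ⟨Set.rangeFactorization ev, ev.continuous.rangeFactorization⟩
  let coord (a : A) : C(Set.range ev, 𝕜) :=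
    ⟨fun z => (z : A → 𝕜) a, (continuous_apply a).comp continuous_subtype_val⟩
  have hsepZ : (A.comap (compStarAlgHom' 𝕜 𝕜 π)).SeparatesPoints := by
    intro z w hzw
    obtain ⟨a, ha⟩ := Function.ne_iff.mp (Subtype.coe_ne_coe.mpr hzw)
    exact ⟨coord a, ⟨coord a, a.2, rfl⟩, ha⟩
  have hinj : Function.Injective (π.restrict K) := by
    intro x y hxy
    refine Subtype.ext (hsep x x.2 y y.2 fun a ha => ?_)
    exact congrFun (congrArg Subtype.val hxy) ⟨a, ha⟩
  obtain ⟨f, hf⟩ := exists_extension ((π.restrict K).continuous.isClosedEmbedding hinj) g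
  exact ⟨f.comp π, comp_mem_of_separatesPoints hA π hsepZ f, hf⟩

end StarSubalgebra

section Annihilator

variable [CompactSpace X] [T2Space X] {A : StarSubalgebra 𝕜 C(X, 𝕜)} {Y : Set X}

lemma eq_of_topologicalClosure_adjoin_union_annihilator_eq_top
    (htop : (StarAlgebra.adjoin 𝕜
      ((A : Set C(X, 𝕜)) ∪ {a : C(X, 𝕜) | ∀ y ∈ Y, a y = 0})).topologicalClosure = ⊤)
    {x y : X} (hx : x ∈ closure Y) (hy : y ∈ closure Y) (hxy : ∀ a ∈ A, a x = a y) : x = y := by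
  by_contra hne
  obtain ⟨f, hf⟩ := exists_continuousMap_apply_ne (𝕜 := 𝕜) hne
  refine hf (apply_eq_apply_of_mem_topologicalClosure_adjoin ?_ (htop ▸ StarSubalgebra.mem_top))
  rintro a (ha | ha)
  · exact hxy a ha
  · exact (eqOn_closure_zero_of_forall_eq_zero ha hx).trans
      (eqOn_closure_zero_of_forall_eq_zero ha hy).symm

lemma topologicalClosure_adjoin_union_annihilator_eq_top
    (hsep : ∀ x ∈ closure Y, ∀ y ∈ closure Y, (∀ a ∈ A, a x = a y) → x = y) :
    (StarAlgebra.adjoin 𝕜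
      ((A : Set C(X, 𝕜)) ∪ {a : C(X, 𝕜) | ∀ y ∈ Y, a y = 0})).topologicalClosure = ⊤ := by
  set S := (A : Set C(X, 𝕜)) ∪ {a : C(X, 𝕜) | ∀ y ∈ Y, a y = 0}
  refine starSubalgebra_topologicalClosure_eq_top_of_separatesPoints _ fun x y hne => ?_
  suffices h : ∃ a ∈ S, a x ≠ a y by
    obtain ⟨a, ha, hne'⟩ := h
    exact ⟨a, ⟨a, StarAlgebra.subset_adjoin 𝕜 S ha, rfl⟩, hne'⟩
  have of_notMem {x y : X} (hne : x ≠ y) (hy : y ∉ closure Y) : ∃ a ∈ S, a x ≠ a y := by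
    obtain ⟨f, hf0, hf⟩ :=
      exists_continuousMap_eqOn_zero_apply_ne (𝕜 := 𝕜) isClosed_closure hne hy
    exact ⟨f, Or.inr fun z hz => hf0 (subset_closure hz), hf⟩
  by_cases hx : x ∈ closure Y
  · by_cases hy : y ∈ closure Y
    · obtain ⟨a, ha, hne'⟩ : ∃ a ∈ A, a x ≠ a y := by
        by_contra! h
        exact hne (hsep x hx y hy h)
      exact ⟨a, Or.inl ha, hne'⟩
    · exact of_notMem hne hy
  · obtain ⟨a, ha, hne'⟩ := of_notMem hne.symm hx
    exact ⟨a, ha, hne'.symm⟩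

end Annihilator

/-- For a compact Hausdorff space `X`, a subset `Y ⊆ X` and a closed unital star-subalgebra
`A` of `C(X, ℂ)`, the following are equivalent: (1) the closed star-subalgebra generated by
`A` together with the annihilator of `Y` is all of `C(X, ℂ)`; (2) the elements of `A`
separate the points of `closure Y`; (3) the restriction map sends `A` onto
`C(closure Y, ℂ)`. -/
theorem stmt_11 (X : Type u) [TopologicalSpace X] [CompactSpace X] [T2Space X]
    (Y : Set X) (A : StarSubalgebra ℂ C(X, ℂ)) (hA : IsClosed (A : Set C(X, ℂ))) :
    ((StarAlgebra.adjoin ℂ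
        ((A : Set C(X, ℂ)) ∪ {a : C(X, ℂ) | ∀ y ∈ Y, a y = 0})).topologicalClosure = ⊤
      ↔ ∀ x ∈ closure Y, ∀ y ∈ closure Y, (∀ a ∈ A, a x = a y) → x = y) ∧
    ((∀ x ∈ closure Y, ∀ y ∈ closure Y, (∀ a ∈ A, a x = a y) → x = y)
      ↔ ∀ g : C(↥(closure Y), ℂ), ∃ a ∈ A, a.restrict (closure Y) = g) := by
  have : CompactSpace (closure Y) := isCompact_iff_compactSpace.mp isClosed_closure.isCompact
  refine ⟨⟨fun htop x hx y hy =>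
      eq_of_topologicalClosure_adjoin_union_annihilator_eq_top htop hx hy,
    topologicalClosure_adjoin_union_annihilator_eq_top⟩,
    ⟨StarSubalgebra.exists_mem_restrict_eq hA isClosed_closure, fun hsurj x hx y hy hxy => ?_⟩⟩
  by_contra hne
  obtain ⟨g, hg⟩ := exists_continuousMap_apply_ne (𝕜 := ℂ)
    (x := (⟨x, hx⟩ : closure Y)) (y := ⟨y, hy⟩) (fun h => hne (congrArg Subtype.val h))
  obtain ⟨a, ha, rfl⟩ := hsurj g
  exact hg (hxy a ha)
end

section
/- Let X be a compact Hausdorff space. Suppose that for every compact Hausdorff space Y admitting a continuous surjection from X, if Y has a topological basis of cardinality at most 2^ℵ₀ (the continuum), then Y is a Fréchet–Urysohn space. Then X itself is a Fréchet–Urysohn space. -/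
/-!
Call a family of at most `𝔠` continuous functions `X → ℝ` small. The image of `X` in `ℝ^ι`
under a small family is a continuous image of weight `≤ 𝔠`, so it is Fréchet–Urysohn: every
`x ∈ closure S` is the limit of a sequence from `S` in the topology induced by the family.

If `x` lies in the closure of a countable `C`, continuous functions have at most `𝔠 ^ ℵ₀ = 𝔠`
restrictions to `C`, and one representative per restriction separates the points of `closure C`.
A sequence in `C` converging to `x` through all representatives has `x` as its only cluster point,
so by compactness it converges to `x`.

Otherwise some `x ∈ closure S` is in the closure of no countable `C ⊆ S`. Recursion along `ω₁`
then yields points `z α`, each in the closure of a countable part of `S`, and Urysohn functions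
`f α` vanishing at `x`, equal to `1` at earlier points and to `0` at later ones. Every `f α`
vanishes at a cluster point `y` of `z`; but a sequence from `z` converging to `y` through the
`ℵ₁ ≤ 𝔠` functions `f α` has its indices bounded by some `β < ω₁`, and `f β = 1` along it.
-/

open Cardinal Set Filter Topology TopologicalSpace

universe u

theorem TopologicalSpace.exists_isTopologicalBasis_mk_le_of_eq_generateFrom {α : Type u}
    [t : TopologicalSpace α] {s : Set (Set α)} (hs : t = generateFrom s) :
    ∃ B : Set (Set α), IsTopologicalBasis B ∧ #B ≤ max ℵ₀ #s := by
  refine ⟨_, isTopologicalBasis_of_subbasis hs, mk_image_le.trans ?_⟩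
  have hsurj : Function.Surjective fun l : List s =>
      (⟨Subtype.val '' {x | x ∈ l}, (List.finite_toSet l).image _, by simp⟩ :
        {f : Set (Set α) | f.Finite ∧ f ⊆ s}) := by
    rintro ⟨f, hf, hfs⟩
    have hf' : (Subtype.val ⁻¹' f : Set s).Finite := hf.preimage Subtype.val_injective.injOn
    refine ⟨hf'.toFinset.toList, Subtype.ext ?_⟩
    simp only [Finset.mem_toList, Finite.mem_toFinset, ofPred_mem_eq]
    exact image_preimage_eq_of_subset (by simpa using hfs)
  exact (mk_le_of_surjective hsurj).trans (mk_list_le_max _)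

theorem exists_isTopologicalBasis_pi_real_mk_le (ι : Type u) :
    ∃ B : Set (Set (ι → ℝ)), IsTopologicalBasis B ∧ #B ≤ max ℵ₀ #ι := by
  obtain ⟨T, hTc, -, hT⟩ := exists_countable_basis ℝ
  have hgen : (Pi.topologicalSpace : TopologicalSpace (ι → ℝ)) =
      generateFrom (⋃ i, preimage (fun g : ι → ℝ => g i) '' T) := by
    rw [generateFrom_iUnion]
    simp only [← induced_generateFrom_eq, ← hT.eq_generateFrom]
    rfl
  obtain ⟨B, hB, hBcard⟩ := exists_isTopologicalBasis_mk_le_of_eq_generateFrom hgen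
  refine ⟨B, hB, hBcard.trans (max_le (le_max_left _ _) ?_)⟩
  calc #(⋃ i, preimage (fun g : ι → ℝ => g i) '' T)
      ≤ #ι * ⨆ i, #(preimage (fun g : ι → ℝ => g i) '' T) := mk_iUnion_le _
    _ ≤ #ι * ℵ₀ := by
      gcongr
      exact ciSup_le' fun i => (hTc.image _).le_aleph0
    _ ≤ max ℵ₀ #ι := (mul_le_max _ _).trans (by simp [le_total])

theorem exists_mk_le_continuum_separating_closure {X : Type u} [TopologicalSpace X]
    [T35Space X] {C : Set X} (hC : C.Countable) :
    ∃ (ι : Type u) (A : ι → C(X, ℝ)), #ι ≤ 𝔠 ∧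
      ∀ y ∈ closure C, ∀ z ∈ closure C, (∀ i, A i y = A i z) → y = z := by
  -- one representative for each restriction to `C`, which determines it on `closure C`
  let ι := range fun f : C(X, ℝ) => C.domRestrict f
  have hcard : #ι ≤ 𝔠 := by
    have : Countable C := hC.to_subtype
    calc #ι ≤ #(C → ℝ) := mk_set_le _
      _ = 𝔠 ^ #C := by rw [mk_arrow, mk_real, lift_continuum, lift_uzero]
      _ ≤ 𝔠 ^ ℵ₀ := power_le_power_left continuum_ne_zero mk_le_aleph0
      _ = 𝔠 := continuum_power_aleph0
  refine ⟨ι, fun i => i.2.choose, hcard, fun y hy z hz hyz => ?_⟩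
  by_contra hne
  obtain ⟨f, hf, hfyz⟩ := separatesPoints_continuous_of_t35Space hne
  let i : ι := ⟨_, ⟨f, hf⟩, rfl⟩
  have hAf : EqOn i.2.choose (⟨f, hf⟩ : C(X, ℝ)) (closure C) :=
    EqOn.closure (fun c hc => congrFun i.2.choose_spec ⟨c, hc⟩) (map_continuous _)
      (map_continuous _)
  exact hfyz (by simpa [hAf hy, hAf hz] using hyz i)

theorem MapClusterPt.eq_of_tendsto_comp {α X Y : Type*} [TopologicalSpace X]
    [TopologicalSpace Y] [T2Space Y] {l : Filter α} {t : α → X} {z : X}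
    (hz : MapClusterPt z l t) {f : X → Y} (hf : Continuous f) {c : Y}
    (hc : Tendsto (f ∘ t) l (𝓝 c)) : f z = c :=
  have : (𝓝 (f z) ⊓ map (f ∘ t) l).NeBot := hz.continuousAt_comp hf.continuousAt
  eq_of_nhds_neBot (this.mono (inf_le_inf_left _ hc))

theorem MapClusterPt.mem_closure_of_forall_mem {α X : Type*} [TopologicalSpace X]
    {l : Filter α} {t : α → X} {z : X} (hz : MapClusterPt z l t) {C : Set X}
    (ht : ∀ a, t a ∈ C) : z ∈ closure C :=
  isClosed_closure.mem_of_mapClusterPt hz (.of_forall fun a => subset_closure (ht a))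

theorem notMem_closure_range_of_forall_mem_closure_countable {X : Type*} [TopologicalSpace X]
    {S : Set X} {x : X} (hS : ∀ C ⊆ S, C.Countable → x ∉ closure C) {ι : Type*} [Countable ι]
    {z : ι → X} (hz : ∀ i, ∃ C ⊆ S, C.Countable ∧ z i ∈ closure C) : x ∉ closure (range z) := by
  choose C hCS hC hzC using hz
  refine fun hx => hS (⋃ i, C i) (iUnion_subset hCS) (countable_iUnion hC)
    (closure_minimal ?_ isClosed_closure hx)
  rintro _ ⟨i, rfl⟩
  exact closure_mono (subset_iUnion C i) (hzC i)

theorem WellFoundedLT.exists_forall_rel_of_extend {α β : Type*} [Preorder α] [WellFoundedLT α]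
    (p : β → Prop) (r : β → β → Prop)
    (h : ∀ b : α, ∀ g : Iio b → β, (∀ a, p (g a)) → ∃ d, p d ∧ ∀ a, r (g a) d) :
    ∃ g : α → β, (∀ a, p (g a)) ∧ ∀ a b, a < b → r (g a) (g b) := by
  let step (b : α) (prev : ∀ a, a < b → {d // p d}) : {d // p d} :=
    ⟨_, (h b (fun a => prev a a.2) fun a => (prev a a.2).2).choose_spec.1⟩
  let g := wellFounded_lt.fix step
  refine ⟨fun b => g b, fun b => (g b).2, fun a b hab => ?_⟩
  show r (g a).1 (g b).1
  rw [show g b = step b fun a _ => g a from wellFounded_lt.fix_eq step b]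
  exact (h b (fun a => g a) fun a => (g a).2).choose_spec.2 ⟨a, hab⟩

theorem exists_forall_lt_of_countable {α : Type*} [LinearOrder α] (hα : ¬Countable α)
    (hIio : ∀ b : α, (Iio b).Countable) {s : Set α} (hs : s.Countable) :
    ∃ b, ∀ a ∈ s, a < b := by
  by_contra! hle
  have hIic (a : α) : (Iic a).Countable := Iio_insert (a := a) ▸ (hIio a).insert a
  refine hα (countable_univ_iff.mp ((hs.biUnion fun a _ => hIic a).mono fun b _ => ?_))
  obtain ⟨a, ha, hba⟩ := hle b
  exact mem_biUnion ha hba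

/-- Sequential approximation in every topology induced on `X` by at most `𝔠` continuous real
functions, with closures still taken in the topology of `X`. -/
def FrechetUrysohnAlongSmallFamilies (X : Type u) [TopologicalSpace X] : Prop :=
  ∀ (ι : Type u) (A : ι → C(X, ℝ)), #ι ≤ 𝔠 → ∀ (S : Set X) (x : X), x ∈ closure S →
    ∃ t : ℕ → X, (∀ n, t n ∈ S) ∧ ∀ i, Tendsto (fun n => A i (t n)) atTop (𝓝 (A i x))

theorem frechetUrysohnAlongSmallFamilies_of_forall_image {X : Type u} [TopologicalSpace X]
    [CompactSpace X]
    (h : ∀ (Y : Type u) [TopologicalSpace Y] [CompactSpace Y] [T2Space Y],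
      (∃ f : X → Y, Continuous f ∧ Function.Surjective f) →
      (∃ B : Set (Set Y), IsTopologicalBasis B ∧ #B ≤ 𝔠) → FrechetUrysohnSpace Y) :
    FrechetUrysohnAlongSmallFamilies X := by
  intro ι A hι S x hx
  let g : X → ι → ℝ := fun y i => A i y
  have hg : Continuous g := continuous_pi fun i => (A i).continuous
  have : CompactSpace (range g) := isCompact_iff_compactSpace.mp (isCompact_range hg)
  obtain ⟨B, hB, hBcard⟩ := exists_isTopologicalBasis_pi_real_mk_le ι
  have : FrechetUrysohnSpace (range g) :=
    h _ ⟨rangeFactorization g, hg.rangeFactorization, rangeFactorization_surjective⟩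
      ⟨_, isTopologicalBasis_subtype hB _,
        mk_image_le.trans (hBcard.trans (max_le aleph0_le_continuum hι))⟩
  obtain ⟨u, hu, hlim⟩ := mem_closure_iff_seq_limit.mp <|
    image_closure_subset_closure_image hg.rangeFactorization (mem_image_of_mem _ hx)
  choose t ht hut using hu
  obtain rfl : u = rangeFactorization g ∘ t := funext fun n => (hut n).symm
  exact ⟨t, ht, fun i =>
    ((continuous_apply i).comp continuous_subtype_val).continuousAt.tendsto.comp hlim⟩

namespace FrechetUrysohnAlongSmallFamilies

variable {X : Type u} [TopologicalSpace X] [CompactSpace X]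

theorem exists_mem_closure_countable_forall_eq (hX : FrechetUrysohnAlongSmallFamilies X)
    {ι : Type u} (A : ι → C(X, ℝ)) (hι : #ι ≤ 𝔠) {S : Set X} {x : X} (hx : x ∈ closure S) :
    ∃ C ⊆ S, C.Countable ∧ ∃ y ∈ closure C, ∀ i, A i y = A i x := by
  obtain ⟨t, ht, hlim⟩ := hX ι A hι S x hx
  obtain ⟨y, hy⟩ : ∃ y, MapClusterPt y atTop t := exists_clusterPt_of_compactSpace _
  exact ⟨range t, range_subset_iff.2 ht, countable_range t, y,
    hy.mem_closure_of_forall_mem mem_range_self,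
    fun i => hy.eq_of_tendsto_comp (A i).continuous (hlim i)⟩

theorem false_of_free_seq (hX : FrechetUrysohnAlongSmallFamilies X) {W : Type u}
    [LinearOrder W] (hW : #W ≤ 𝔠) (hbdd : ∀ s : Set W, s.Countable → ∃ b, ∀ a ∈ s, a < b)
    (z : W → X) (f : W → C(X, ℝ)) (hone : ∀ a b, a < b → f b (z a) = 1)
    (hzero : ∀ a b, a < b → f a (z b) = 0) : False := by
  have : Nonempty W := (hbdd ∅ countable_empty).nonempty
  obtain ⟨y, hy⟩ : ∃ y, MapClusterPt y atTop z := exists_clusterPt_of_compactSpace _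
  have hfy (b : W) : f b y = 0 := by
    obtain ⟨c, hc⟩ := hbdd {b} (countable_singleton b)
    refine hy.eq_of_tendsto_comp (f b).continuous (tendsto_const_nhds.congr' ?_)
    filter_upwards [eventually_ge_atTop c] with a hca
    exact (hzero b a ((hc b rfl).trans_le hca)).symm
  obtain ⟨t, ht, hlim⟩ := hX W f hW (range z) y (hy.mem_closure_of_forall_mem mem_range_self)
  choose a ha using ht
  obtain ⟨b, hb⟩ := hbdd (range a) (countable_range a)
  have hone' : Tendsto (fun n => f b (t n)) atTop (𝓝 1) := tendsto_const_nhds.congr fun n => by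
    rw [← ha n, hone _ _ (hb _ (mem_range_self n))]
  exact one_ne_zero (tendsto_nhds_unique hone' (hfy b ▸ hlim b))

variable [T2Space X]

theorem exists_seq_tendsto_of_mem_closure_countable (hX : FrechetUrysohnAlongSmallFamilies X)
    {C : Set X} (hC : C.Countable) {x : X} (hx : x ∈ closure C) :
    ∃ t : ℕ → X, (∀ n, t n ∈ C) ∧ Tendsto t atTop (𝓝 x) := by
  obtain ⟨ι, A, hι, hA⟩ := exists_mk_le_continuum_separating_closure hC
  obtain ⟨t, ht, hlim⟩ := hX ι A hι C x hx
  refine ⟨t, ht, tendsto_nhds_of_unique_mapClusterPt fun z hz => ?_⟩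
  exact hA z (hz.mem_closure_of_forall_mem ht) x hx fun i =>
    hz.eq_of_tendsto_comp (A i).continuous (hlim i)

theorem exists_extend_free_seq (hX : FrechetUrysohnAlongSmallFamilies X) {S : Set X} {x : X}
    (hx : x ∈ closure S) (hS : ∀ C ⊆ S, C.Countable → x ∉ closure C) {ι : Type u}
    [Countable ι] (z : ι → X) (f : ι → C(X, ℝ))
    (hz : ∀ i, ∃ C ⊆ S, C.Countable ∧ z i ∈ closure C) (hf : ∀ i, f i x = 0) :
    ∃ (y : X) (F : C(X, ℝ)), (∃ C ⊆ S, C.Countable ∧ y ∈ closure C) ∧ F x = 0 ∧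
      (∀ i, F (z i) = 1) ∧ ∀ i, f i y = 0 := by
  obtain ⟨C, hCS, hC, y, hyC, hy⟩ :=
    hX.exists_mem_closure_countable_forall_eq f (mk_le_aleph0.trans aleph0_le_continuum) hx
  obtain ⟨F, hFx, hF1, -⟩ := exists_continuous_zero_one_of_isClosed isClosed_singleton
    isClosed_closure (disjoint_singleton_left.2
      (notMem_closure_range_of_forall_mem_closure_countable hS hz))
  exact ⟨y, F, ⟨C, hCS, hC, hyC⟩, hFx rfl, fun i => hF1 (subset_closure (mem_range_self i)),
    fun i => (hy i).trans (hf i)⟩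

theorem exists_countable_subset_mem_closure (hX : FrechetUrysohnAlongSmallFamilies X)
    {S : Set X} {x : X} (hx : x ∈ closure S) : ∃ C ⊆ S, C.Countable ∧ x ∈ closure C := by
  by_contra! hS
  let W := (ℵ₁ : Cardinal.{u}).ord.ToType
  have hIio (b : W) : (Iio b).Countable := by
    rw [← le_aleph0_iff_set_countable, ← lt_aleph_one_iff]
    simpa [W] using mk_Iio_lt b (by simp [W])
  have hW : ¬Countable W := by
    rw [← mk_le_aleph0_iff, not_le]
    simp [W]
  obtain ⟨g, hg, hgr⟩ := WellFoundedLT.exists_forall_rel_of_extend (α := W)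
    (fun d : X × C(X, ℝ) => (∃ C ⊆ S, C.Countable ∧ d.1 ∈ closure C) ∧ d.2 x = 0)
    (fun d e => e.2 d.1 = 1 ∧ d.2 e.1 = 0) fun b g hg => by
      have : Countable (Iio b) := (hIio b).to_subtype
      obtain ⟨y, F, hy, hFx, hF1, hfy⟩ := hX.exists_extend_free_seq hx hS (fun a => (g a).1)
        (fun a => (g a).2) (fun a => (hg a).1) (fun a => (hg a).2)
      exact ⟨(y, F), ⟨hy, hFx⟩, fun a => ⟨hF1 a, hfy a⟩⟩
  exact hX.false_of_free_seq (by simpa [W] using aleph_one_le_continuum)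
    (fun s hs => exists_forall_lt_of_countable hW hIio hs) (fun a => (g a).1) (fun a => (g a).2)
    (fun a b hab => (hgr a b hab).1) (fun a b hab => (hgr a b hab).2)

end FrechetUrysohnAlongSmallFamilies

/-- If every continuous image of the compact Hausdorff space `X` that has a topological
basis of cardinality at most the continuum is Fréchet–Urysohn, then `X` is
Fréchet–Urysohn. -/
theorem stmt_12 (X : Type u) [TopologicalSpace X] [CompactSpace X] [T2Space X]
    (h : ∀ (Y : Type u) [TopologicalSpace Y] [CompactSpace Y] [T2Space Y],
      (∃ f : X → Y, Continuous f ∧ Function.Surjective f) →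
      (∃ B : Set (Set Y), TopologicalSpace.IsTopologicalBasis B ∧ #B ≤ Cardinal.continuum) →
      FrechetUrysohnSpace Y) :
    FrechetUrysohnSpace X := by
  have hX := frechetUrysohnAlongSmallFamilies_of_forall_image h
  refine ⟨fun S x hx => ?_⟩
  obtain ⟨C, hCS, hC, hxC⟩ := hX.exists_countable_subset_mem_closure hx
  obtain ⟨t, ht, hlim⟩ := hX.exists_seq_tendsto_of_mem_closure_countable hC hxC
  exact ⟨t, fun n => hCS (ht n), hlim⟩
end

section
/- Let X be a compact Hausdorff space that is Fréchet–Urysohn, let Y be a Hausdorff space, and let f : X → Y be a continuous surjection. Then Y is Fréchet–Urysohn. -/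
/-- A Hausdorff continuous image of a compact Hausdorff Fréchet–Urysohn space is
Fréchet–Urysohn. -/
theorem stmt_13 {X Y : Type*} [TopologicalSpace X] [CompactSpace X] [T2Space X]
    [FrechetUrysohnSpace X] [TopologicalSpace Y] [T2Space Y]
    (f : X → Y) (hf : Continuous f) (hsurj : Function.Surjective f) :
    FrechetUrysohnSpace Y := by
  constructor
  intro s y hy
  have hclosed : IsClosed (f '' closure (f ⁻¹' s)) :=
    hf.isClosedMap _ isClosed_closure
  have hsub : closure s ⊆ f '' closure (f ⁻¹' s) := by
    apply closure_minimal _ hclosed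
    intro z hz
    obtain ⟨x, rfl⟩ := hsurj z
    exact ⟨x, subset_closure hz, rfl⟩
  obtain ⟨x, hx, rfl⟩ := hsub hy
  obtain ⟨u, hu, hlim⟩ := mem_closure_iff_seq_limit.mp hx
  exact ⟨f ∘ u, fun n => hu n, (hf.tendsto x).comp hlim⟩
end

section
/- Every Corson compact space is Fréchet–Urysohn: if X is a compact subset of the Tychonoff cube [0,1]^κ (the product space of κ copies of Set.Icc (0:ℝ) 1) such that for every x ∈ X the set {ξ < κ : x(ξ) ≠ 0} is countable, then X (with the subspace topology) is a Fréchet–Urysohn space. -/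
open Filter Topology Metric Set

universe u

lemma corson_key {ι : Type u} (X : Set (ι → Set.Icc (0:ℝ) 1))
    (hsupp : ∀ x ∈ X, {ξ : ι | (x ξ : ℝ) ≠ 0}.Countable)
    (S : Set (ι → Set.Icc (0:ℝ) 1)) (hSX : S ⊆ X)
    (z : ι → Set.Icc (0:ℝ) 1) (hzX : z ∈ X) (hz : z ∈ closure S) :
    ∃ u : ℕ → (ι → Set.Icc (0:ℝ) 1), (∀ n, u n ∈ S) ∧ Tendsto u atTop (𝓝 z) := by
  classical
  -- selection function
  set pick : Set ι → ℕ → (ι → Set.Icc (0:ℝ) 1) := fun F n =>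
    if h : ∃ s ∈ S, ∀ ξ ∈ F, dist (s ξ) (z ξ) < 1/(n+1) then h.choose else z with hpick
  have pick_memX : ∀ F n, pick F n ∈ X := by
    intro F n
    by_cases h : ∃ s ∈ S, ∀ ξ ∈ F, dist (s ξ) (z ξ) < 1/(n+1)
    · simp only [hpick, dif_pos h]; exact hSX h.choose_spec.1
    · simp only [hpick, dif_neg h]; exact hzX
  have pick_spec : ∀ (F : Set ι) (n : ℕ), (∃ s ∈ S, ∀ ξ ∈ F, dist (s ξ) (z ξ) < 1/(n+1)) →
      pick F n ∈ S ∧ ∀ ξ ∈ F, dist (pick F n ξ) (z ξ) < 1/(n+1) := by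
    intro F n h
    simp only [hpick, dif_pos h]
    exact ⟨h.choose_spec.1, h.choose_spec.2⟩
  -- recursive countable coordinate sets
  set A : ℕ → Set ι := fun n => Nat.rec {ξ | (z ξ : ℝ) ≠ 0}
    (fun _ An => An ∪ ⋃ F ∈ {t : Set ι | t.Finite ∧ t ⊆ An},
      ⋃ m : ℕ, {ξ | ((pick F m) ξ : ℝ) ≠ 0}) n with hA
  have hA0 : A 0 = {ξ | (z ξ : ℝ) ≠ 0} := rfl
  have hAsucc : ∀ n, A (n+1) = A n ∪ ⋃ F ∈ {t : Set ι | t.Finite ∧ t ⊆ A n},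
      ⋃ m : ℕ, {ξ | ((pick F m) ξ : ℝ) ≠ 0} := fun n => rfl
  have hAcount : ∀ n, (A n).Countable := by
    intro n
    induction n with
    | zero => exact hsupp z hzX
    | succ n ih =>
      rw [hAsucc]
      refine ih.union ((countable_setOf_finite_subset ih).biUnion fun F _ =>
        countable_iUnion fun m => hsupp _ (pick_memX F m))
  have hAmono : Monotone A := monotone_nat_of_le_succ fun n => by
    rw [hAsucc]; exact subset_union_left
  set Ab : Set ι := ⋃ n, A n with hAb
  have hAbcount : Ab.Countable := countable_iUnion hAcount
  have hzsupp : ∀ ξ, ξ ∉ Ab → (z ξ : ℝ) = 0 := by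
    intro ξ hξ
    by_contra h
    exact hξ (mem_iUnion.2 ⟨0, h⟩)
  -- key claim
  have key : ∀ (G : Finset ι) (n : ℕ), ∃ t, t ∈ S ∧ (∀ ξ, ξ ∉ Ab → (t ξ : ℝ) = 0) ∧
      ∀ ξ ∈ G, dist (t ξ) (z ξ) < 1/(n+1) := by
    intro G n
    have hε : (0:ℝ) < 1/(n+1) := by positivity
    set F : Finset ι := G.filter (· ∈ Ab) with hF
    -- F ⊆ A K for some K
    have hFk : ∀ ξ ∈ F, ∃ k, ξ ∈ A k := by
      intro ξ hξ
      have : ξ ∈ Ab := (Finset.mem_filter.1 hξ).2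
      exact mem_iUnion.1 this
    choose k hk using hFk
    set K : ℕ := F.attach.sup fun ξ => k ξ.1 ξ.2 with hK
    have hFK : (F : Set ι) ⊆ A K := by
      intro ξ hξ
      exact hAmono (Finset.le_sup (f := fun ξ : {x // x ∈ F} => k ξ.1 ξ.2)
        (Finset.mem_attach _ ⟨ξ, hξ⟩)) (hk ξ hξ)
    -- the basic neighborhood determined by F meets S
    have hnbhd : {y : ι → Set.Icc (0:ℝ) 1 | ∀ ξ ∈ F, dist (y ξ) (z ξ) < 1/(n+1)} ∈ 𝓝 z := by
      have : ∀ᶠ y in 𝓝 z, ∀ ξ ∈ F, dist (y ξ) (z ξ) < 1/(n+1) := by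
        rw [Filter.eventually_all_finset]
        intro ξ _
        have hc : Continuous fun y : ι → Set.Icc (0:ℝ) 1 => y ξ := continuous_apply ξ
        exact (hc.tendsto z).eventually (Metric.ball_mem_nhds (z ξ) hε)
      exact this
    obtain ⟨y, hy1, hy2⟩ := mem_closure_iff_nhds.1 hz _ hnbhd
    have hcond : ∃ s ∈ S, ∀ ξ ∈ (F : Set ι), dist (s ξ) (z ξ) < 1/(n+1) := ⟨y, hy2, hy1⟩
    obtain ⟨htS, htd⟩ := pick_spec (F : Set ι) n hcond
    refine ⟨pick (F : Set ι) n, htS, ?_, ?_⟩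
    · intro ξ hξ
      by_contra h
      have : ξ ∈ A (K+1) := by
        rw [hAsucc]
        refine Or.inr ?_
        refine mem_biUnion ⟨F.finite_toSet, hFK⟩ (mem_iUnion.2 ⟨n, h⟩)
      exact hξ (mem_iUnion.2 ⟨K+1, this⟩)
    · intro ξ hξG
      by_cases hξA : ξ ∈ Ab
      · exact htd ξ (Finset.mem_filter.2 ⟨hξG, hξA⟩)
      · have h1 : (pick (F : Set ι) n ξ : ℝ) = 0 := by
          by_contra h
          have : ξ ∈ A (K+1) := by
            rw [hAsucc]
            exact Or.inr (mem_biUnion ⟨F.finite_toSet, hFK⟩ (mem_iUnion.2 ⟨n, h⟩))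
          exact hξA (mem_iUnion.2 ⟨K+1, this⟩)
        have h2 := hzsupp ξ hξA
        rw [Subtype.dist_eq, h1, h2]
        simpa using hε
  -- now build the sequence
  rcases eq_empty_or_nonempty Ab with hAbe | hAbne
  · obtain ⟨t, htS, ht0, -⟩ := key ∅ 0
    refine ⟨fun _ => t, fun _ => htS, ?_⟩
    have : t = z := by
      funext ξ
      have hξ : ξ ∉ Ab := by rw [hAbe]; exact notMem_empty ξ
      exact Subtype.ext ((ht0 ξ hξ).trans (hzsupp ξ hξ).symm)
    rw [this]; exact tendsto_const_nhds
  · obtain ⟨e, he⟩ := hAbcount.exists_eq_range hAbne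
    choose t htS ht0 htd using fun n => key ((Finset.range n).image e) n
    refine ⟨t, htS, ?_⟩
    rw [tendsto_pi_nhds]
    intro ξ
    by_cases hξ : ξ ∈ Ab
    · obtain ⟨j, rfl⟩ : ∃ j, e j = ξ := by rwa [he, mem_range] at hξ
      rw [Metric.tendsto_atTop]
      intro ε hε
      obtain ⟨N, hN⟩ := exists_nat_one_div_lt hε
      refine ⟨max (j+1) N, fun n hn => ?_⟩
      have hjn : j < n := lt_of_lt_of_le (Nat.lt_succ_self j) (le_trans (le_max_left _ _) hn)
      have h1 : e j ∈ (Finset.range n).image e :=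
        Finset.mem_image.2 ⟨j, Finset.mem_range.2 hjn, rfl⟩
      calc dist (t n (e j)) (z (e j)) < 1/(n+1) := htd n (e j) h1
        _ ≤ 1/(N+1) := by
              apply one_div_le_one_div_of_le (by positivity)
              have : N ≤ n := le_trans (le_max_right _ _) hn
              exact_mod_cast Nat.succ_le_succ this
        _ < ε := hN
    · have : ∀ n, t n ξ = z ξ := fun n =>
        Subtype.ext ((ht0 n ξ hξ).trans (hzsupp ξ hξ).symm)
      simp only [this]
      exact tendsto_const_nhds

/-- Every Corson compact space is Fréchet–Urysohn: if `X` is a compact subset of a Tychonoff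
cube `[0,1]^ι` all of whose points have countable support, then `X` with the subspace
topology is Fréchet–Urysohn. -/
theorem stmt_14 {ι : Type u} (X : Set (ι → Set.Icc (0:ℝ) 1)) (hX : IsCompact X)
    (hsupp : ∀ x ∈ X, {ξ : ι | (x ξ : ℝ) ≠ 0}.Countable) :
    FrechetUrysohnSpace ↥X := by
  constructor
  intro s x hx
  have hx' : (x : ι → Set.Icc (0:ℝ) 1) ∈ closure (Subtype.val '' s) := closure_subtype.1 hx
  obtain ⟨u, huS, hu⟩ := corson_key X hsupp (Subtype.val '' s)
    (by rintro _ ⟨y, -, rfl⟩; exact y.2) x x.2 hx'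
  choose w hw hwu using huS
  refine ⟨w, hw, ?_⟩
  rw [IsEmbedding.subtypeVal.tendsto_nhds_iff]
  have : Subtype.val ∘ w = u := funext hwu
  rw [this]
  exact hu
end

section
/- The double arrow space D, i.e. the set (Set.Icc (0:ℝ) 1) × Bool equipped with the lexicographic linear order (where false < true) and its order topology, is a compact Hausdorff space that is first-countable and separable. -/
/-- The double arrow space: `[0,1] × Bool` with the lexicographic order topology. -/
abbrev DoubleArrow : Type := Lex (Set.Icc (0:ℝ) 1 × Bool)

noncomputable instance : TopologicalSpace DoubleArrow := Preorder.topology DoubleArrow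

instance : OrderTopology DoubleArrow := ⟨rfl⟩

/-!
The lexicographic product of two complete linear orders is again a complete linear order (take
the supremum of the first coordinates, then the supremum of the second coordinates among the
elements attaining it), and a complete linear order is compact in its order topology.

The points over rationals are dense: `(t, false)` is the supremum of the rational points below it
and `(t, true)` the infimum of those above it.

A separable linear order is first countable, even without being densely ordered: for `y > x`
either `Ico x y = {x}`, so that `𝓝[≥] x` is principal, or `Ioo x y` is a nonempty open set and
so contains some `d` of a fixed countable dense set, giving the countable basis `Ico x d` of
`𝓝[≥] x`.
-/

open Set Filter Topology TopologicalSpace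

namespace Prod.Lex

variable {α β : Type*} [CompleteLinearOrder α] [CompleteLinearOrder β]

noncomputable instance : SupSet (α ×ₗ β) where
  sSup s :=
    let a := sSup ((fun x => (ofLex x).1) '' s)
    toLex (a, sSup {b | toLex (a, b) ∈ s})

protected theorem isLUB_sSup (s : Set (α ×ₗ β)) : IsLUB s (sSup s) := by
  refine ⟨fun x hx => le_iff'.2 ⟨le_sSup ⟨x, hx, rfl⟩, fun h => le_sSup ?_⟩,
    fun u hu => le_iff'.2 ⟨sSup_le ?_, fun h => sSup_le fun b hb => (le_iff'.1 (hu hb)).2 h⟩⟩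
  · have h : (ofLex x).1 = sSup ((fun x => (ofLex x).1) '' s) := h
    rw [mem_ofPred_eq, ← h]
    exact hx
  · rintro _ ⟨x, hx, rfl⟩
    exact monotone_fst _ _ (hu hx)

noncomputable instance : InfSet (α ×ₗ β) where
  sInf s := sSup (lowerBounds s)

noncomputable instance : CompleteLinearOrder (α ×ₗ β) where
  __ := instLinearOrder α β
  __ := boundedOrder
  isLUB_sSup := Prod.Lex.isLUB_sSup
  isGLB_sInf s := isLUB_lowerBounds.1 (Prod.Lex.isLUB_sSup (lowerBounds s))
  __ := LinearOrder.toBiheytingAlgebra _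

end Prod.Lex

section OrderTopology

variable {α : Type*} [TopologicalSpace α] [LinearOrder α] [OrderTopology α] [SeparableSpace α]

theorem isCountablyGenerated_nhdsGE_of_separableSpace (x : α) :
    (𝓝[≥] x).IsCountablyGenerated := by
  by_cases hx : {x} ∈ 𝓝[≥] x
  · rw [le_antisymm (le_pure_iff.2 hx) (pure_le_nhdsWithin self_mem_Ici)]
    exact isCountablyGenerated_pure x
  obtain ⟨s, hsc, hsd⟩ := exists_countable_dense α
  have : Countable s := hsc.to_subtype
  have hgt : ∃ y, x < y := by
    by_contra! h
    exact hx (by simp [(Ici_eq_singleton_iff_isTop).2 h])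
  suffices (𝓝[≥] x).HasBasis (fun d : s => x < d) (Ico x ·) from this.isCountablyGenerated
  refine (nhdsGE_basis_of_exists_gt hgt).to_hasBasis (fun y hy => ?_)
    fun d hd => ⟨d, hd, subset_rfl⟩
  obtain ⟨d, hd, hds⟩ : (Ioo x y ∩ s).Nonempty := by
    refine hsd.inter_open_nonempty _ isOpen_Ioo (nonempty_iff_ne_empty.2 fun h => hx ?_)
    simpa [← Ioo_insert_left hy, h] using Ico_mem_nhdsGE hy
  exact ⟨⟨d, hds⟩, hd.1, Ico_subset_Ico_right hd.2.le⟩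

variable (α) in
theorem FirstCountableTopology.of_separableSpace_orderTopology : FirstCountableTopology α where
  nhds_generated_countable x := by
    have := isCountablyGenerated_nhdsGE_of_separableSpace x
    have : (𝓝[≤] x).IsCountablyGenerated :=
      isCountablyGenerated_nhdsGE_of_separableSpace (OrderDual.toDual x)
    rw [← nhdsLE_sup_nhdsGE]
    exact Sup.isCountablyGenerated _ _

end OrderTopology

namespace DoubleArrow

noncomputable def ratPoint (q : ℚ × Bool) : DoubleArrow :=
  toLex (projIcc 0 1 zero_le_one q.1, q.2)

theorem exists_btwn_forall_mem_range_ratPoint {s t : Icc (0:ℝ) 1} (hst : s < t) :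
    ∃ r, s < r ∧ r < t ∧ ∀ b, toLex (r, b) ∈ range ratPoint := by
  obtain ⟨q, hsq, hqt⟩ := exists_rat_btwn (Subtype.coe_lt_coe.2 hst)
  have hq : (q : ℝ) ∈ Icc 0 1 := ⟨s.2.1.trans hsq.le, hqt.le.trans t.2.2⟩
  exact ⟨⟨q, hq⟩, hsq, hqt, fun b => ⟨(q, b), by simp [ratPoint, projIcc_of_mem _ hq]⟩⟩

theorem isLUB_range_ratPoint_inter_Iic (t : Icc (0:ℝ) 1) :
    IsLUB (range ratPoint ∩ Iic (toLex (t, false))) (toLex (t, false)) := by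
  refine ⟨fun x hx => hx.2, fun u hu => not_lt.1 fun hut => ?_⟩
  have hut : (ofLex u).1 < t := by simpa [Bool.lt_iff] using Prod.Lex.lt_iff.1 hut
  obtain ⟨r, hur, hrt, hr⟩ := exists_btwn_forall_mem_range_ratPoint hut
  exact (hu ⟨hr false, Prod.Lex.le_iff.2 (.inl hrt)⟩).not_gt (Prod.Lex.lt_iff.2 (.inl hur))

theorem isGLB_range_ratPoint_inter_Ici (t : Icc (0:ℝ) 1) :
    IsGLB (range ratPoint ∩ Ici (toLex (t, true))) (toLex (t, true)) := by
  refine ⟨fun x hx => hx.2, fun u hu => not_lt.1 fun htu => ?_⟩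
  have htu : t < (ofLex u).1 := by simpa [Bool.lt_iff] using Prod.Lex.lt_iff.1 htu
  obtain ⟨r, htr, hru, hr⟩ := exists_btwn_forall_mem_range_ratPoint htu
  exact (hu ⟨hr true, Prod.Lex.le_iff.2 (.inl htr)⟩).not_gt (Prod.Lex.lt_iff.2 (.inl hru))

theorem denseRange_ratPoint : DenseRange ratPoint := by
  intro x
  obtain ⟨⟨t, b⟩, rfl⟩ := toLex.surjective x
  cases b
  · exact closure_mono inter_subset_left <| (isLUB_range_ratPoint_inter_Iic t).mem_closure
      ⟨ratPoint (0, false), mem_range_self _, Prod.Lex.toLex_mono ⟨by simp, le_rfl⟩⟩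
  · exact closure_mono inter_subset_left <| (isGLB_range_ratPoint_inter_Ici t).mem_closure
      ⟨ratPoint (1, true), mem_range_self _,
        Prod.Lex.toLex_mono ⟨by simp [← Subtype.coe_le_coe, t.2.2], le_rfl⟩⟩

instance : SeparableSpace DoubleArrow :=
  ⟨⟨range ratPoint, countable_range _, denseRange_ratPoint⟩⟩

end DoubleArrow

/-- The double arrow space is compact, Hausdorff, first-countable and separable. -/
theorem stmt_15 :
    CompactSpace DoubleArrow ∧ T2Space DoubleArrow ∧
      FirstCountableTopology DoubleArrow ∧
      TopologicalSpace.SeparableSpace DoubleArrow :=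
  ⟨inferInstance, inferInstance, .of_separableSpace_orderTopology DoubleArrow, inferInstance⟩
end

section
/- Let D be the double arrow space, i.e. (Set.Icc (0:ℝ) 1) × Bool with the lexicographic order (false < true) and its order topology. For every countable family F of continuous functions D → ℝ there exists x with 0 < x < 1 such that f(x, false) = f(x, true) for every f ∈ F. In particular, no countable family of continuous real-valued functions separates the points of D. -/
/-!
As `z` decreases to `x`, both `(z, false)` and `(z, true)` converge to `(x, true)` in the
lexicographic order topology, so for continuous `f` the gap `dist (f (z, false)) (f (z, true))`
tends to `0` from the right. Hence the points where the gap is at least `ε` are isolated on the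
right within that set, and such a set is countable in a second countable order. Letting
`ε = 1 / (n + 1)`, the points where `f (x, false) ≠ f (x, true)` form a countable set; a countable
union of these misses some point of the uncountable interval `(0, 1)`.
-/

open Set Filter Topology

section LexBool

variable {α β : Type*} [LinearOrder α] [TopologicalSpace α] [OrderTopology α]
  [TopologicalSpace (α ×ₗ Bool)] [OrderTopology (α ×ₗ Bool)]

theorem tendsto_toLex_nhdsGT (x : α) (b : Bool) :
    Tendsto (fun z => toLex (z, b)) (𝓝[>] x) (𝓝 (toLex (x, true))) := by
  refine tendsto_order.2 ⟨fun a ha => ?_, fun a ha => ?_⟩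
  · filter_upwards [self_mem_nhdsWithin] with z (hz : x < z)
    exact ha.trans (Prod.Lex.toLex_lt_toLex.2 (Or.inl hz))
  · have hxa : x < (ofLex a).1 := by
      rcases Prod.Lex.lt_iff.1 ha with h | ⟨_, h⟩
      · exact h
      · exact absurd h (by simp)
    filter_upwards [nhdsWithin_le_nhds (Iio_mem_nhds hxa)] with z (hz : z < _)
    exact Prod.Lex.lt_iff.2 (Or.inl hz)

theorem Continuous.tendsto_dist_toLex_nhdsGT [PseudoMetricSpace β] {f : α ×ₗ Bool → β}
    (hf : Continuous f) (x : α) :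
    Tendsto (fun z => dist (f (toLex (z, false))) (f (toLex (z, true)))) (𝓝[>] x) (𝓝 0) := by
  simpa using ((hf.tendsto _).comp (tendsto_toLex_nhdsGT x false)).dist
    ((hf.tendsto _).comp (tendsto_toLex_nhdsGT x true))

theorem Continuous.countable_setOf_le_dist_toLex [SecondCountableTopology α]
    [PseudoMetricSpace β] {f : α ×ₗ Bool → β} (hf : Continuous f) {ε : ℝ} (hε : 0 < ε) :
    {x | ε ≤ dist (f (toLex (x, false))) (f (toLex (x, true)))}.Countable := by
  set J := {x | ε ≤ dist (f (toLex (x, false))) (f (toLex (x, true)))}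
  refine (countable_setOfPred_isolated_right_within (s := J)).mono fun x hx => mem_sep hx ?_
  have hsmall : ∀ᶠ z in 𝓝[>] x, dist (f (toLex (z, false))) (f (toLex (z, true))) < ε :=
    (hf.tendsto_dist_toLex_nhdsGT x).eventually (gt_mem_nhds hε)
  rw [inter_comm, nhdsWithin_inter, ← empty_mem_iff_bot]
  filter_upwards [mem_inf_of_left hsmall, mem_inf_of_right self_mem_nhdsWithin] with z hlt hle
  exact (not_le.2 hlt) hle

theorem Continuous.countable_setOf_toLex_ne [SecondCountableTopology α] [MetricSpace β]
    {f : α ×ₗ Bool → β} (hf : Continuous f) :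
    {x | f (toLex (x, false)) ≠ f (toLex (x, true))}.Countable := by
  refine (countable_iUnion fun n : ℕ =>
    hf.countable_setOf_le_dist_toLex (Nat.one_div_pos_of_nat (n := n))).mono fun x hx => ?_
  obtain ⟨n, hn⟩ := exists_nat_one_div_lt (dist_pos.2 hx)
  exact mem_iUnion.2 ⟨n, hn.le⟩

end LexBool

/-- For every countable family `F` of continuous real-valued functions on the double arrow
space there is `x` with `0 < x < 1` such that every `f ∈ F` takes the same value at
`(x, false)` and `(x, true)`. -/
theorem stmt_16 (F : Set (DoubleArrow → ℝ)) (hF : F.Countable)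
    (hcont : ∀ f ∈ F, Continuous f) :
    ∃ x : Set.Icc (0:ℝ) 1, (0:ℝ) < (x : ℝ) ∧ (x : ℝ) < 1 ∧
      ∀ f ∈ F, f (toLex (x, false)) = f (toLex (x, true)) := by
  have hbad : (⋃ f ∈ F, {x : Icc (0:ℝ) 1 | f (toLex (x, false)) ≠ f (toLex (x, true))}).Countable :=
    hF.biUnion fun f hf => (hcont f hf).countable_setOf_toLex_ne
  obtain ⟨x, hx_good, hx⟩ := ((hbad.image Subtype.val).dense_compl ℝ).exists_mem_open isOpen_Ioo
    (nonempty_Ioo.2 zero_lt_one)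
  refine ⟨⟨x, hx.1.le, hx.2.le⟩, hx.1, hx.2, fun f hf => ?_⟩
  by_contra hne
  exact hx_good ⟨_, mem_biUnion hf hne, rfl⟩
end
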